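/- arXiv:2406.01058 — 13 statements merged into one kernel-verified Lean document; each statement's English description precedes it below -/
import Mathlib

section
/- Fix integers n_u ≥ 1, n_c ≥ 1 and constants ḡ > δ̄ ≥ 0, and set λ = (ḡ+δ̄)/(ḡ−δ̄). Let α : ℝ → ℝ be continuous, strictly increasing, with α(0) = 0, and suppose α(s) + λ·α(−s) ≤ 0 for every s ≤ 0. For each j ∈ {1,…,n_c} let ᾱ_j : ℝ → ℝ be a continuous strictly increasing bijection with ᾱ_j(0) = 0, let a_j ∈ ℝ^{n_u} be a unit vector, and let r_j, d_j ∈ ℝ satisfy r_j ≤ ᾱ_j(d_j). Assume d_j + d_k ≤ 0 whenever j ≠ k. Then the set F = { u ∈ ℝ^{n_u} : ⟨a_j, u⟩ + (δ̄/ḡ)·‖u‖ ≤ −α(ᾱ_j⁻¹(r_j)) for all j = 1,…,n_c } is nonempty. -/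
/-!
Write `s j = ᾱ_j⁻¹(r_j)`; then `s j ≤ d j`, so the `s j` inherit the disjointness
condition `s j + s k ≤ 0` for `j ≠ k`. If every `s j ≤ 0`, all right-hand sides
`-α (s j)` are nonnegative and `u = 0` is feasible. Otherwise some `s j₀ > 0` forces
`s j ≤ -s j₀ < 0` for all other `j`; pushing against `a j₀` with
`u = -(ḡ/(ḡ-δ̄) α(s j₀)) a j₀` meets constraint `j₀` with equality, and constraint `j`
costs at most `λ α(s j₀) ≤ λ α(-s j) ≤ -α(s j)` by the hypothesis on `α`.
-/

open scoped RealInnerProductSpace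

open Function in
theorem invFun_le_of_le_apply {f : ℝ → ℝ} (hf : StrictMono f) (hsurj : Surjective f)
    {r d : ℝ} (h : r ≤ f d) : invFun f r ≤ d := by
  rw [← hf.le_iff_le, rightInverse_invFun hsurj r]
  exact h

theorem mul_le_neg_of_le_neg {α : ℝ → ℝ} {l : ℝ} (hα : Monotone α)
    (hcond : ∀ s ≤ (0 : ℝ), α s + l * α (-s) ≤ 0) (hl : 0 ≤ l)
    {s t : ℝ} (ht : 0 ≤ t) (hst : s ≤ -t) : l * α t ≤ -α s := by
  have hαt : α t ≤ α (-s) := hα (by linarith)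
  nlinarith [hcond s (by linarith), mul_le_mul_of_nonneg_left hαt hl]

section InnerProductSpace

variable {E : Type*} [NormedAddCommGroup E] [InnerProductSpace ℝ E]

theorem norm_neg_smul_of_norm_eq_one {a : E} (ha : ‖a‖ = 1) {c : ℝ} (hc : 0 ≤ c) :
    ‖-(c • a)‖ = c := by
  rw [norm_neg, norm_smul, ha, Real.norm_of_nonneg hc, mul_one]

theorem inner_neg_smul_self_of_norm_eq_one {a : E} (ha : ‖a‖ = 1) (c : ℝ) :
    ⟪a, -(c • a)⟫ = -c := by
  rw [inner_neg_right, real_inner_smul_right, real_inner_self_eq_norm_sq, ha]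
  ring

theorem inner_neg_smul_le_of_norm_eq_one {a b : E} (ha : ‖a‖ = 1) (hb : ‖b‖ = 1)
    {c : ℝ} (hc : 0 ≤ c) : ⟪b, -(c • a)⟫ ≤ c := by
  have hcs : -1 ≤ ⟪b, a⟫ := by
    simpa [ha, hb] using neg_le_of_abs_le (abs_real_inner_le_norm b a)
  rw [inner_neg_right, real_inner_smul_right]
  nlinarith

variable {ι : Type*} {gbar δbar : ℝ} {α : ℝ → ℝ} {a : ι → E} {s : ι → ℝ}

theorem exists_feasible_of_forall_nonpos (hα : Monotone α) (hα0 : α 0 = 0)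
    (hs : ∀ j, s j ≤ 0) :
    ∃ u : E, ∀ j, ⟪a j, u⟫ + δbar / gbar * ‖u‖ ≤ -α (s j) :=
  ⟨0, fun j => by simpa [hα0] using hα (hs j)⟩

theorem exists_feasible_of_le_neg (hδ0 : 0 ≤ δbar) (hδg : δbar < gbar)
    (hα : Monotone α) (hα0 : α 0 = 0)
    (hαcond : ∀ s ≤ (0 : ℝ), α s + (gbar + δbar) / (gbar - δbar) * α (-s) ≤ 0)
    (ha : ∀ j, ‖a j‖ = 1) {j₀ : ι} (hj₀ : 0 ≤ s j₀) (hs : ∀ j ≠ j₀, s j ≤ -s j₀) :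
    ∃ u : E, ∀ j, ⟪a j, u⟫ + δbar / gbar * ‖u‖ ≤ -α (s j) := by
  have hg : 0 < gbar := hδ0.trans_lt hδg
  have hgδ : 0 < gbar - δbar := sub_pos.mpr hδg
  set c := gbar / (gbar - δbar) * α (s j₀) with hc_def
  have hc : 0 ≤ c := mul_nonneg (by positivity) (hα0 ▸ hα hj₀)
  refine ⟨-(c • a j₀), fun j => ?_⟩
  rw [norm_neg_smul_of_norm_eq_one (ha j₀) hc]
  rcases eq_or_ne j j₀ with rfl | hj
  · rw [inner_neg_smul_self_of_norm_eq_one (ha j)]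
    have : -c + δbar / gbar * c = -α (s j) := by
      rw [hc_def]; field_simp; ring
    exact this.le
  · have hcost : c + δbar / gbar * c = (gbar + δbar) / (gbar - δbar) * α (s j₀) := by
      rw [hc_def]; field_simp
    have hl : 0 ≤ (gbar + δbar) / (gbar - δbar) := div_nonneg (by linarith) hgδ.le
    linarith [inner_neg_smul_le_of_norm_eq_one (ha j₀) (ha j) hc,
      mul_le_neg_of_le_neg hα hαcond hl hj₀ (hs j hj)]

theorem exists_feasible_of_pairwise_add_nonpos (hδ0 : 0 ≤ δbar) (hδg : δbar < gbar)
    (hα : Monotone α) (hα0 : α 0 = 0)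
    (hαcond : ∀ s ≤ (0 : ℝ), α s + (gbar + δbar) / (gbar - δbar) * α (-s) ≤ 0)
    (ha : ∀ j, ‖a j‖ = 1) (hs : ∀ j k, j ≠ k → s j + s k ≤ 0) :
    ∃ u : E, ∀ j, ⟪a j, u⟫ + δbar / gbar * ‖u‖ ≤ -α (s j) := by
  by_cases hpos : ∃ j₀, 0 < s j₀
  · obtain ⟨j₀, hj₀⟩ := hpos
    exact exists_feasible_of_le_neg hδ0 hδg hα hα0 hαcond ha hj₀.le
      fun j hj => by linarith [hs j j₀ hj]
  · push Not at hpos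
    exact exists_feasible_of_forall_nonpos hα hα0 hpos

end InnerProductSpace

theorem stmt0_general (n_u n_c : ℕ)
    (gbar δbar : ℝ) (hδ0 : 0 ≤ δbar) (hδg : δbar < gbar)
    (α : ℝ → ℝ) (hαmono : StrictMono α) (hα0 : α 0 = 0)
    (hαcond : ∀ s ≤ (0 : ℝ),
      α s + (gbar + δbar) / (gbar - δbar) * α (-s) ≤ 0)
    (ᾱ : Fin n_c → ℝ → ℝ)
    (hᾱmono : ∀ j, StrictMono (ᾱ j))
    (hᾱbij : ∀ j, Function.Bijective (ᾱ j))
    (a : Fin n_c → EuclideanSpace ℝ (Fin n_u)) (ha : ∀ j, ‖a j‖ = 1)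
    (r d : Fin n_c → ℝ) (hrd : ∀ j, r j ≤ ᾱ j (d j))
    (hdisj : ∀ j k, j ≠ k → d j + d k ≤ 0) :
    ∃ u : EuclideanSpace ℝ (Fin n_u),
      ∀ j, ⟪a j, u⟫ + δbar / gbar * ‖u‖ ≤ -α (Function.invFun (ᾱ j) (r j)) := by
  have hsd : ∀ j, Function.invFun (ᾱ j) (r j) ≤ d j := fun j =>
    invFun_le_of_le_apply (hᾱmono j) (hᾱbij j).surjective (hrd j)
  exact exists_feasible_of_pairwise_add_nonpos hδ0 hδg hαmono.monotone hα0 hαcond ha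
    fun j k hjk => by linarith [hsd j, hsd k, hdisj j k hjk]

/-- Theorem 1, Property 1 of the paper, in abstract form: feasibility of the
QCQP safety constraints. The condition `λ_min(g gᵀ) ≥ ḡ²` and normalized gradients
are abstracted into unit vectors `a j` and the constants `gbar`, `δbar`. -/
theorem stmt0 (n_u n_c : ℕ) (hnu : 1 ≤ n_u) (hnc : 1 ≤ n_c)
    (gbar δbar : ℝ) (hδ0 : 0 ≤ δbar) (hδg : δbar < gbar)
    (α : ℝ → ℝ) (hαcont : Continuous α) (hαmono : StrictMono α) (hα0 : α 0 = 0)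
    (hαcond : ∀ s ≤ (0 : ℝ),
      α s + (gbar + δbar) / (gbar - δbar) * α (-s) ≤ 0)
    (ᾱ : Fin n_c → ℝ → ℝ)
    (hᾱcont : ∀ j, Continuous (ᾱ j))
    (hᾱmono : ∀ j, StrictMono (ᾱ j))
    (hᾱbij : ∀ j, Function.Bijective (ᾱ j))
    (hᾱ0 : ∀ j, ᾱ j 0 = 0)
    (a : Fin n_c → EuclideanSpace ℝ (Fin n_u)) (ha : ∀ j, ‖a j‖ = 1)
    (r d : Fin n_c → ℝ) (hrd : ∀ j, r j ≤ ᾱ j (d j))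
    (hdisj : ∀ j k, j ≠ k → d j + d k ≤ 0) :
    ∃ u : EuclideanSpace ℝ (Fin n_u),
      ∀ j, ⟪a j, u⟫ + δbar / gbar * ‖u‖ ≤ -α (Function.invFun (ᾱ j) (r j)) :=
  stmt0_general n_u n_c gbar δbar hδ0 hδg α hαmono hα0 hαcond ᾱ hᾱmono hᾱbij a ha r d hrd hdisj
end

section
/- Fix integers n ≥ 1, m ≥ 1 and constants 0 ≤ δ̄ < ḡ. Let a_1,…,a_n ∈ ℝ^m be unit vectors and b_1,…,b_n ∈ ℝ. If min_j b_j ≥ 0, then u = 0 satisfies ⟨a_j, u⟩ + (δ̄/ḡ)·‖u‖ ≤ b_j for all j. If instead b_k = min_j b_j < 0 and b_j ≥ −((ḡ+δ̄)/(ḡ−δ̄))·b_k for every j, then the vector u* = (ḡ·b_k/(ḡ−δ̄))·a_k satisfies ⟨a_j, u*⟩ + (δ̄/ḡ)·‖u*‖ ≤ b_j for all j = 1,…,n; in particular the set { u ∈ ℝ^m : ⟨a_j, u⟩ + (δ̄/ḡ)·‖u‖ ≤ b_j for all j } is nonempty. -/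
open scoped RealInnerProductSpace

/-!
The witness is a negative multiple `c • a k` of the normal of the tightest constraint. By
Cauchy–Schwarz every constraint function at it is at most `(1 + δ̄/ḡ) |c|`, and the choice
`c = ḡ b_k / (ḡ - δ̄)` makes this bound equal to `-((ḡ + δ̄)/(ḡ - δ̄)) b_k`, which is at most
every `b_j` by hypothesis (with equality for `j = k`).
-/

theorem real_inner_add_mul_norm_le {E : Type*} [NormedAddCommGroup E] [InnerProductSpace ℝ E]
    (x v : E) (t : ℝ) : ⟪x, v⟫ + t * ‖v‖ ≤ (‖x‖ + t) * ‖v‖ := by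
  rw [add_mul]
  gcongr
  exact real_inner_le_norm x v

theorem one_add_div_mul_abs_witness_scale {g δ β : ℝ} (hδ : 0 ≤ δ) (hδg : δ < g) (hβ : β < 0) :
    (1 + δ / g) * |g * β / (g - δ)| = -((g + δ) / (g - δ)) * β := by
  have hg : 0 < g := hδ.trans_lt hδg
  have hgδ : 0 < g - δ := sub_pos.mpr hδg
  rw [abs_of_neg (div_neg_of_neg_of_pos (mul_neg_of_pos_of_neg hg hβ) hgδ)]
  field_simp

theorem stmt1_general (n m : ℕ)
    (gbar δbar : ℝ) (hδ0 : 0 ≤ δbar) (hδg : δbar < gbar)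
    (a : Fin n → EuclideanSpace ℝ (Fin m)) (ha : ∀ j, ‖a j‖ = 1)
    (b : Fin n → ℝ) :
    ((∀ j, 0 ≤ b j) →
      ∀ j, ⟪a j, (0 : EuclideanSpace ℝ (Fin m))⟫
          + δbar / gbar * ‖(0 : EuclideanSpace ℝ (Fin m))‖ ≤ b j) ∧
    (∀ k, (∀ j, b k ≤ b j) → b k < 0 →
      (∀ j, -((gbar + δbar) / (gbar - δbar)) * b k ≤ b j) →
      ((∀ j, ⟪a j, (gbar * b k / (gbar - δbar)) • a k⟫
          + δbar / gbar * ‖(gbar * b k / (gbar - δbar)) • a k‖ ≤ b j) ∧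
        ∃ u : EuclideanSpace ℝ (Fin m),
          ∀ j, ⟪a j, u⟫ + δbar / gbar * ‖u‖ ≤ b j)) := by
  refine ⟨fun hb j => by simpa using hb j, fun k _ hneg hbig => ?_⟩
  have hfeas : ∀ j, ⟪a j, (gbar * b k / (gbar - δbar)) • a k⟫
      + δbar / gbar * ‖(gbar * b k / (gbar - δbar)) • a k‖ ≤ b j := fun j =>
    calc _ ≤ (‖a j‖ + δbar / gbar) * ‖(gbar * b k / (gbar - δbar)) • a k‖ :=
          real_inner_add_mul_norm_le _ _ _
      _ = (1 + δbar / gbar) * |gbar * b k / (gbar - δbar)| := by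
          rw [norm_smul, ha, ha, mul_one, Real.norm_eq_abs]
      _ = -((gbar + δbar) / (gbar - δbar)) * b k :=
          one_add_div_mul_abs_witness_scale hδ0 hδg hneg
      _ ≤ b j := hbig j
  exact ⟨hfeas, _, hfeas⟩

/-- The explicit feasibility witness (equations (31), (34), (38)) in the proof of
Theorem 1, Property 1 of the paper. -/
theorem stmt1 (n m : ℕ) (hn : 1 ≤ n) (hm : 1 ≤ m)
    (gbar δbar : ℝ) (hδ0 : 0 ≤ δbar) (hδg : δbar < gbar)
    (a : Fin n → EuclideanSpace ℝ (Fin m)) (ha : ∀ j, ‖a j‖ = 1)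
    (b : Fin n → ℝ) :
    ((∀ j, 0 ≤ b j) →
      ∀ j, ⟪a j, (0 : EuclideanSpace ℝ (Fin m))⟫
          + δbar / gbar * ‖(0 : EuclideanSpace ℝ (Fin m))‖ ≤ b j) ∧
    (∀ k, (∀ j, b k ≤ b j) → b k < 0 →
      (∀ j, -((gbar + δbar) / (gbar - δbar)) * b k ≤ b j) →
      ((∀ j, ⟪a j, (gbar * b k / (gbar - δbar)) • a k⟫
          + δbar / gbar * ‖(gbar * b k / (gbar - δbar)) • a k‖ ≤ b j) ∧
        ∃ u : EuclideanSpace ℝ (Fin m),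
          ∀ j, ⟪a j, u⟫ + δbar / gbar * ‖u‖ ≤ b j)) :=
  stmt1_general n m gbar δbar hδ0 hδg a ha b
end

section
/- Fix integers n, m ≥ 1 and constants ḡ > 0, δ̄ ≥ 0. Let g be a real n×m matrix with λ_min(g·gᵀ) ≥ ḡ², and let δ be a real n×m matrix with induced 2-norm ‖δ‖ ≤ δ̄. Let p ∈ ℝ^n with p ≠ 0, let F ∈ ℝ^n, u, w ∈ ℝ^m, and β ∈ ℝ. If ⟨gᵀp/‖gᵀp‖, u⟩ + (δ̄/ḡ)·‖u‖ ≤ −β, then ⟨p, F + (g+δ)(u+w)⟩ ≤ −‖gᵀp‖·( β − ‖F‖/ḡ − (1 + δ̄/ḡ)·‖w‖ ). -/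
/-!
Write `q = gᵀ p`. The nominal input term `⟪p, g u⟫ = ⟪q, u⟫` equals `‖q‖` times the inner product
of the unit vector `q / ‖q‖` with `u`, which the hypothesis on `u` controls. Every other term is
bounded by Cauchy–Schwarz through `‖p‖`, and the lower bound `ḡ ‖p‖ ≤ ‖q‖` converts `‖p‖` into
`‖q‖ / ḡ`; the margin `(δ̄ / ḡ) ‖u‖` built into the hypothesis on `u` absorbs the `u`-part of the
perturbation `⟪p, δ (u + w)⟫`.
-/

open scoped RealInnerProductSpace

section

variable {U X : Type*} [NormedAddCommGroup U] [InnerProductSpace ℝ U]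
  [NormedAddCommGroup X] [InnerProductSpace ℝ X]

theorem real_inner_eq_norm_mul_inner_inv_norm_smul (q u : U) :
    ⟪q, u⟫ = ‖q‖ * ⟪‖q‖⁻¹ • q, u⟫ := by
  rcases eq_or_ne q 0 with rfl | hq
  · simp
  · rw [real_inner_smul_left, mul_inv_cancel_left₀ (norm_ne_zero_iff.mpr hq)]

theorem real_inner_apply_le_of_opNorm_le {δ : U →L[ℝ] X} {c : ℝ} (hδ : ‖δ‖ ≤ c) (p : X) (v : U) :
    ⟪p, δ v⟫ ≤ ‖p‖ * (c * ‖v‖) :=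
  (real_inner_le_norm p (δ v)).trans
    (mul_le_mul_of_nonneg_left (δ.le_of_opNorm_le hδ v) (norm_nonneg p))

variable [CompleteSpace U] [CompleteSpace X]

theorem real_inner_add_perturbed_apply_le {gbar δbar β : ℝ} (hg : 0 < gbar) {g δ : U →L[ℝ] X}
    (hgmin : ∀ p, gbar * ‖p‖ ≤ ‖ContinuousLinearMap.adjoint g p‖) (hδ : ‖δ‖ ≤ δbar)
    (p F : X) (u w : U)
    (hu : ⟪(‖ContinuousLinearMap.adjoint g p‖)⁻¹ • ContinuousLinearMap.adjoint g p, u⟫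
        + δbar / gbar * ‖u‖ ≤ -β) :
    ⟪p, F + (g + δ) (u + w)⟫
      ≤ -(‖ContinuousLinearMap.adjoint g p‖
          * (β - ‖F‖ / gbar - (1 + δbar / gbar) * ‖w‖)) := by
  set q := ContinuousLinearMap.adjoint g p
  have hpq : ‖p‖ ≤ ‖q‖ / gbar := (le_div_iff₀' hg).mpr (hgmin p)
  have hδbar : 0 ≤ δbar := (norm_nonneg δ).trans hδ
  have hsplit : ⟪p, F + (g + δ) (u + w)⟫ = ⟪p, F⟫ + ⟪q, u⟫ + ⟪q, w⟫ + ⟪p, δ (u + w)⟫ := by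
    simp only [q, add_apply, inner_add_right,
      ContinuousLinearMap.adjoint_inner_left, map_add]
    ring
  have hF : ⟪p, F⟫ ≤ ‖q‖ / gbar * ‖F‖ :=
    (real_inner_le_norm p F).trans (by gcongr)
  have hu' : ⟪q, u⟫ ≤ ‖q‖ * (-β - δbar / gbar * ‖u‖) := by
    rw [real_inner_eq_norm_mul_inner_inv_norm_smul]
    exact mul_le_mul_of_nonneg_left (by linarith) (norm_nonneg q)
  have hw : ⟪q, w⟫ ≤ ‖q‖ * ‖w‖ := real_inner_le_norm q w
  have hδuw : ⟪p, δ (u + w)⟫ ≤ ‖q‖ / gbar * (δbar * (‖u‖ + ‖w‖)) :=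
    (real_inner_apply_le_of_opNorm_le hδ p (u + w)).trans (by gcongr; exact norm_add_le u w)
  calc ⟪p, F + (g + δ) (u + w)⟫
      ≤ ‖q‖ / gbar * ‖F‖ + ‖q‖ * (-β - δbar / gbar * ‖u‖) + ‖q‖ * ‖w‖
          + ‖q‖ / gbar * (δbar * (‖u‖ + ‖w‖)) := by linarith
    _ = -(‖q‖ * (β - ‖F‖ / gbar - (1 + δbar / gbar) * ‖w‖)) := by ring

end

theorem stmt3_general (n m : ℕ)
    (gbar δbar : ℝ) (hg : 0 < gbar)
    (g δ : EuclideanSpace ℝ (Fin m) →L[ℝ] EuclideanSpace ℝ (Fin n))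
    (hgmin : ∀ p : EuclideanSpace ℝ (Fin n),
      gbar * ‖p‖ ≤ ‖ContinuousLinearMap.adjoint g p‖)
    (hδnorm : ‖δ‖ ≤ δbar)
    (p : EuclideanSpace ℝ (Fin n))
    (F : EuclideanSpace ℝ (Fin n)) (u w : EuclideanSpace ℝ (Fin m)) (β : ℝ)
    (hu : ⟪(‖ContinuousLinearMap.adjoint g p‖)⁻¹ • ContinuousLinearMap.adjoint g p, u⟫
        + δbar / gbar * ‖u‖ ≤ -β) :
    ⟪p, F + (g + δ) (u + w)⟫
      ≤ -(‖ContinuousLinearMap.adjoint g p‖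
          * (β - ‖F‖ / gbar - (1 + δbar / gbar) * ‖w‖)) :=
  real_inner_add_perturbed_apply_le hg hgmin hδnorm p F u w hu

/-- The pointwise robust dissipation inequality (Appendix B, establishing (19)) of
the paper. The eigenvalue condition `λ_min(g gᵀ) ≥ ḡ²` is encoded by its equivalent
form `‖gᵀ p‖ ≥ ḡ ‖p‖` for all `p`, and matrices are represented by continuous linear
maps between Euclidean spaces, whose operator norm is the induced 2-norm. -/
theorem stmt3 (n m : ℕ) (hn : 1 ≤ n) (hm : 1 ≤ m)
    (gbar δbar : ℝ) (hg : 0 < gbar) (hδ0 : 0 ≤ δbar)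
    (g δ : EuclideanSpace ℝ (Fin m) →L[ℝ] EuclideanSpace ℝ (Fin n))
    (hgmin : ∀ p : EuclideanSpace ℝ (Fin n),
      gbar * ‖p‖ ≤ ‖ContinuousLinearMap.adjoint g p‖)
    (hδnorm : ‖δ‖ ≤ δbar)
    (p : EuclideanSpace ℝ (Fin n)) (hp : p ≠ 0)
    (F : EuclideanSpace ℝ (Fin n)) (u w : EuclideanSpace ℝ (Fin m)) (β : ℝ)
    (hu : ⟪(‖ContinuousLinearMap.adjoint g p‖)⁻¹ • ContinuousLinearMap.adjoint g p, u⟫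
        + δbar / gbar * ‖u‖ ≤ -β) :
    ⟪p, F + (g + δ) (u + w)⟫
      ≤ -(‖ContinuousLinearMap.adjoint g p‖
          * (β - ‖F‖ / gbar - (1 + δbar / gbar) * ‖w‖)) :=
  stmt3_general n m gbar δbar hg g δ hgmin hδnorm p F u w β hu
end

section
/- Fix integers n, m, n_z ≥ 1 and constants ḡ > 0, δ̄ ≥ 0, η > 0, θ > 0 and 0 < v < c. Let γ^w, γ^z : [0,∞) → [0,∞) be continuous strictly increasing bijections, let f̄_z, f̄_x : [0,∞) → [0,∞) be nondecreasing, and let α_c : (−v,∞) → ℝ be strictly increasing. Let X ⊆ ℝ^n be open and V : X → [0,∞) differentiable. Let x ∈ X, z ∈ ℝ^{n_z}, u, w ∈ ℝ^m, F ∈ ℝ^n, let g be a real n×m matrix with λ_min(g·gᵀ) ≥ ḡ², and let δ be a real n×m matrix with ‖δ‖ ≤ δ̄. Assume: (i) V(x) ≥ max{ γ^w(‖w‖), γ^z(‖z‖), c }; (ii) ‖∇V(x)‖ ≥ η; (iii) the gain condition α_c(((c−v)/c)·V(x)) ≥ θ·V(x) + (1/ḡ)·f̄_z((γ^z)⁻¹(V(x)))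 + (1 + δ̄/ḡ)·(γ^w)⁻¹(V(x)) + (1/ḡ)·f̄_x(‖x‖); (iv) ‖F‖ ≤ f̄_z(‖z‖) + f̄_x(‖x‖); (v) ⟨gᵀ∇V(x)/‖gᵀ∇V(x)‖, u⟩ + (δ̄/ḡ)·‖u‖ ≤ −α_c(V(x) − v). Then ⟨∇V(x), F + (g+δ)(u+w)⟩ ≤ −η·ḡ·θ·V(x). -/
/-!
Write `p = ∇V(x)` and `q = gᵀ p`, so that `ḡ ‖p‖ ≤ ‖q‖`. Every term of
`⟪p, F + (g + δ)(u + w)⟫` is then bounded by a multiple of `‖q‖`: the drift and the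
disturbance contribute at most `‖q‖ (f̄/ḡ + (1 + δ̄/ḡ) (γ^w)⁻¹(V))`, while the control,
together with the worst case of its perturbation by `δ`, contributes at most `-‖q‖ α_c(V - v)`.
Since `((c - v)/c) V ≤ V - v`, the gain condition makes the total at most `-‖q‖ θ V`,
and `‖q‖ ≥ ḡ η`.
-/

open scoped RealInnerProductSpace

lemma sub_div_mul_le_sub {v c V : ℝ} (hv : 0 ≤ v) (hvc : v < c) (hcV : c ≤ V) :
    (c - v) / c * V ≤ V - v := by
  have hc : 0 < c := hv.trans_lt hvc
  rw [div_mul_eq_mul_div, div_le_iff₀ hc]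
  nlinarith

lemma MonotoneOn.apply_sub_div_mul_le_apply_sub {α : ℝ → ℝ} {v c V : ℝ}
    (hα : MonotoneOn α (Set.Ioi (-v))) (hv : 0 ≤ v) (hvc : v < c) (hcV : c ≤ V) :
    α ((c - v) / c * V) ≤ α (V - v) := by
  have hc : 0 < c := hv.trans_lt hvc
  have hpos : 0 < (c - v) / c * V :=
    mul_pos (div_pos (sub_pos.2 hvc) hc) (hc.trans_le hcV)
  refine hα ?_ ?_ (sub_div_mul_le_sub hv hvc hcV) <;> simp only [Set.mem_Ioi] <;> linarith

lemma real_inner_eq_norm_mul_inner_normalize {U : Type*} [NormedAddCommGroup U]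
    [InnerProductSpace ℝ U] (q u : U) : ⟪q, u⟫ = ‖q‖ * ⟪‖q‖⁻¹ • q, u⟫ := by
  rcases eq_or_ne q 0 with rfl | hq
  · simp
  · rw [real_inner_smul_left, mul_inv_cancel_left₀ (norm_ne_zero_iff.2 hq)]

section Adjoint

variable {E U : Type*} [NormedAddCommGroup E] [InnerProductSpace ℝ E] [CompleteSpace E]
  [NormedAddCommGroup U] [InnerProductSpace ℝ U] [CompleteSpace U]

lemma real_inner_add_apply_le {g δ : U →L[ℝ] E} {gbar δbar : ℝ} (hg : 0 < gbar)
    {p : E} (hgp : gbar * ‖p‖ ≤ ‖ContinuousLinearMap.adjoint g p‖) (hδ : ‖δ‖ ≤ δbar) (y : U) :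
    ⟪p, (g + δ) y⟫ ≤ ⟪ContinuousLinearMap.adjoint g p, y⟫
      + ‖ContinuousLinearMap.adjoint g p‖ * (δbar / gbar) * ‖y‖ := by
  set q := ContinuousLinearMap.adjoint g p
  have hp : ‖p‖ ≤ ‖q‖ / gbar := (le_div_iff₀' hg).2 hgp
  have hδy : ⟪p, δ y⟫ ≤ ‖q‖ * (δbar / gbar) * ‖y‖ := calc
    ⟪p, δ y⟫ ≤ ‖p‖ * (‖δ‖ * ‖y‖) :=
      (real_inner_le_norm _ _).trans (mul_le_mul_of_nonneg_left (δ.le_opNorm y) (norm_nonneg p))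
    _ ≤ ‖q‖ / gbar * (δbar * ‖y‖) := by gcongr
    _ = ‖q‖ * (δbar / gbar) * ‖y‖ := by ring
  rw [add_apply, inner_add_right, ← ContinuousLinearMap.adjoint_inner_left]
  linarith

lemma real_inner_add_apply_add_le {g δ : U →L[ℝ] E} {gbar δbar a b A : ℝ} (hg : 0 < gbar)
    {p F : E} {u w : U} (hgp : gbar * ‖p‖ ≤ ‖ContinuousLinearMap.adjoint g p‖)
    (hδ : ‖δ‖ ≤ δbar) (hF : ‖F‖ ≤ a) (hw : ‖w‖ ≤ b)
    (hu : ⟪‖ContinuousLinearMap.adjoint g p‖⁻¹ • ContinuousLinearMap.adjoint g p, u⟫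
        + δbar / gbar * ‖u‖ ≤ -A) :
    ⟪p, F + (g + δ) (u + w)⟫ ≤
      ‖ContinuousLinearMap.adjoint g p‖ * (1 / gbar * a + (1 + δbar / gbar) * b - A) := by
  set q := ContinuousLinearMap.adjoint g p
  have hδbar : 0 ≤ δbar := (norm_nonneg δ).trans hδ
  have hF_term : ⟪p, F⟫ ≤ ‖q‖ * (1 / gbar * a) := calc
    ⟪p, F⟫ ≤ ‖p‖ * ‖F‖ := real_inner_le_norm _ _
    _ ≤ ‖q‖ / gbar * a := by
      gcongr
      exact (le_div_iff₀' hg).2 hgp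
    _ = ‖q‖ * (1 / gbar * a) := by ring
  have hu_term : ⟪p, (g + δ) u⟫ ≤ ‖q‖ * -A := calc
    ⟪p, (g + δ) u⟫ ≤ ⟪q, u⟫ + ‖q‖ * (δbar / gbar) * ‖u‖ := real_inner_add_apply_le hg hgp hδ u
    _ = ‖q‖ * (⟪‖q‖⁻¹ • q, u⟫ + δbar / gbar * ‖u‖) := by
      rw [real_inner_eq_norm_mul_inner_normalize q u]; ring
    _ ≤ ‖q‖ * -A := by gcongr
  have hw_term : ⟪p, (g + δ) w⟫ ≤ ‖q‖ * ((1 + δbar / gbar) * b) := calc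
    ⟪p, (g + δ) w⟫ ≤ ⟪q, w⟫ + ‖q‖ * (δbar / gbar) * ‖w‖ := real_inner_add_apply_le hg hgp hδ w
    _ ≤ ‖q‖ * ‖w‖ + ‖q‖ * (δbar / gbar) * ‖w‖ := by gcongr; exact real_inner_le_norm q w
    _ = ‖q‖ * ((1 + δbar / gbar) * ‖w‖) := by ring
    _ ≤ ‖q‖ * ((1 + δbar / gbar) * b) := by gcongr
  rw [map_add, inner_add_right, inner_add_right]
  linarith

end Adjoint

theorem stmt4_general (n m n_z : ℕ)
    (gbar δbar η θ v c : ℝ)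
    (hg : 0 < gbar) (hθ : 0 < θ)
    (hv : 0 < v) (hvc : v < c)
    (γw γz γw_inv γz_inv : ℝ → ℝ)
    (hγw_mono : StrictMonoOn γw (Set.Ici 0))
    (hγz_mono : StrictMonoOn γz (Set.Ici 0))
    (hγw_inv : ∀ s ∈ Set.Ici (0 : ℝ), γw_inv s ∈ Set.Ici (0 : ℝ) ∧ γw (γw_inv s) = s)
    (hγz_inv : ∀ s ∈ Set.Ici (0 : ℝ), γz_inv s ∈ Set.Ici (0 : ℝ) ∧ γz (γz_inv s) = s)
    (fz fx : ℝ → ℝ)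
    (hfz_mono : MonotoneOn fz (Set.Ici 0))
    (αc : ℝ → ℝ) (hαc : StrictMonoOn αc (Set.Ioi (-v)))
    (V : EuclideanSpace ℝ (Fin n) → ℝ)
    (x : EuclideanSpace ℝ (Fin n))
    (z : EuclideanSpace ℝ (Fin n_z)) (u w : EuclideanSpace ℝ (Fin m))
    (F : EuclideanSpace ℝ (Fin n))
    (g δ : EuclideanSpace ℝ (Fin m) →L[ℝ] EuclideanSpace ℝ (Fin n))
    (hgmin : ∀ p : EuclideanSpace ℝ (Fin n),
      gbar * ‖p‖ ≤ ‖ContinuousLinearMap.adjoint g p‖)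
    (hδnorm : ‖δ‖ ≤ δbar)
    (h1 : max (max (γw ‖w‖) (γz ‖z‖)) c ≤ V x)
    (h2 : η ≤ ‖gradient V x‖)
    (h3 : θ * V x + 1 / gbar * fz (γz_inv (V x)) + (1 + δbar / gbar) * γw_inv (V x)
        + 1 / gbar * fx ‖x‖ ≤ αc ((c - v) / c * V x))
    (h4 : ‖F‖ ≤ fz ‖z‖ + fx ‖x‖)
    (h5 : ⟪(‖ContinuousLinearMap.adjoint g (gradient V x)‖)⁻¹ •
            ContinuousLinearMap.adjoint g (gradient V x), u⟫
        + δbar / gbar * ‖u‖ ≤ -αc (V x - v)) :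
    ⟪gradient V x, F + (g + δ) (u + w)⟫ ≤ -(η * gbar * θ * V x) := by
  set q := ContinuousLinearMap.adjoint g (gradient V x)
  have hcV : c ≤ V x := le_of_max_le_right h1
  have hV : 0 ≤ V x := by linarith
  obtain ⟨hw_inv_nonneg, hw_inv⟩ := hγw_inv (V x) hV
  obtain ⟨hz_inv_nonneg, hz_inv⟩ := hγz_inv (V x) hV
  have hw : ‖w‖ ≤ γw_inv (V x) := (hγw_mono.le_iff_le (norm_nonneg w) hw_inv_nonneg).1
    (by rw [hw_inv]; exact (le_max_left _ _).trans (le_of_max_le_left h1))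
  have hz : ‖z‖ ≤ γz_inv (V x) := (hγz_mono.le_iff_le (norm_nonneg z) hz_inv_nonneg).1
    (by rw [hz_inv]; exact (le_max_right _ _).trans (le_of_max_le_left h1))
  have hF : ‖F‖ ≤ fz (γz_inv (V x)) + fx ‖x‖ :=
    h4.trans (add_le_add_left (hfz_mono (norm_nonneg z) hz_inv_nonneg hz) _)
  have hgain := h3.trans (hαc.monotoneOn.apply_sub_div_mul_le_apply_sub hv.le hvc hcV)
  have hq : gbar * η ≤ ‖q‖ := (mul_le_mul_of_nonneg_left h2 hg.le).trans (hgmin _)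
  calc ⟪gradient V x, F + (g + δ) (u + w)⟫
      ≤ ‖q‖ * (1 / gbar * (fz (γz_inv (V x)) + fx ‖x‖) + (1 + δbar / gbar) * γw_inv (V x)
          - αc (V x - v)) := real_inner_add_apply_add_le hg (hgmin _) hδnorm hF hw h5
    _ ≤ ‖q‖ * -(θ * V x) := by gcongr; linarith
    _ ≤ gbar * η * -(θ * V x) := mul_le_mul_of_nonpos_right hq (neg_nonpos.2 (mul_nonneg hθ.le hV))
    _ = -(η * gbar * θ * V x) := by ring

/-- The pointwise decrease implication at the heart of Theorem 1, Property 2 of the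
paper. The eigenvalue condition `λ_min(g gᵀ) ≥ ḡ²` is encoded by its equivalent form
`‖gᵀ p‖ ≥ ḡ ‖p‖`, matrices are continuous linear maps between Euclidean spaces
(operator norm = induced 2-norm), and the class-K bijections `γ^w, γ^z` of `[0,∞)`
are given together with right inverses on `[0,∞)`. -/
theorem stmt4 (n m n_z : ℕ) (hn : 1 ≤ n) (hm : 1 ≤ m) (hnz : 1 ≤ n_z)
    (gbar δbar η θ v c : ℝ)
    (hg : 0 < gbar) (hδ0 : 0 ≤ δbar) (hη : 0 < η) (hθ : 0 < θ)
    (hv : 0 < v) (hvc : v < c)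
    (γw γz γw_inv γz_inv : ℝ → ℝ)
    (hγw_cont : ContinuousOn γw (Set.Ici 0))
    (hγw_mono : StrictMonoOn γw (Set.Ici 0))
    (hγw_bij : Set.BijOn γw (Set.Ici 0) (Set.Ici 0))
    (hγz_cont : ContinuousOn γz (Set.Ici 0))
    (hγz_mono : StrictMonoOn γz (Set.Ici 0))
    (hγz_bij : Set.BijOn γz (Set.Ici 0) (Set.Ici 0))
    (hγw_inv : ∀ s ∈ Set.Ici (0 : ℝ), γw_inv s ∈ Set.Ici (0 : ℝ) ∧ γw (γw_inv s) = s)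
    (hγz_inv : ∀ s ∈ Set.Ici (0 : ℝ), γz_inv s ∈ Set.Ici (0 : ℝ) ∧ γz (γz_inv s) = s)
    (fz fx : ℝ → ℝ)
    (hfz_mono : MonotoneOn fz (Set.Ici 0)) (hfz0 : ∀ s ∈ Set.Ici (0 : ℝ), 0 ≤ fz s)
    (hfx_mono : MonotoneOn fx (Set.Ici 0)) (hfx0 : ∀ s ∈ Set.Ici (0 : ℝ), 0 ≤ fx s)
    (αc : ℝ → ℝ) (hαc : StrictMonoOn αc (Set.Ioi (-v)))
    (X : Set (EuclideanSpace ℝ (Fin n))) (hX : IsOpen X)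
    (V : EuclideanSpace ℝ (Fin n) → ℝ) (hVnonneg : ∀ y ∈ X, 0 ≤ V y)
    (x : EuclideanSpace ℝ (Fin n)) (hx : x ∈ X)
    (hVdiff : DifferentiableAt ℝ V x)
    (z : EuclideanSpace ℝ (Fin n_z)) (u w : EuclideanSpace ℝ (Fin m))
    (F : EuclideanSpace ℝ (Fin n))
    (g δ : EuclideanSpace ℝ (Fin m) →L[ℝ] EuclideanSpace ℝ (Fin n))
    (hgmin : ∀ p : EuclideanSpace ℝ (Fin n),
      gbar * ‖p‖ ≤ ‖ContinuousLinearMap.adjoint g p‖)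
    (hδnorm : ‖δ‖ ≤ δbar)
    (h1 : max (max (γw ‖w‖) (γz ‖z‖)) c ≤ V x)
    (h2 : η ≤ ‖gradient V x‖)
    (h3 : θ * V x + 1 / gbar * fz (γz_inv (V x)) + (1 + δbar / gbar) * γw_inv (V x)
        + 1 / gbar * fx ‖x‖ ≤ αc ((c - v) / c * V x))
    (h4 : ‖F‖ ≤ fz ‖z‖ + fx ‖x‖)
    (h5 : ⟪(‖ContinuousLinearMap.adjoint g (gradient V x)‖)⁻¹ •
            ContinuousLinearMap.adjoint g (gradient V x), u⟫
        + δbar / gbar * ‖u‖ ≤ -αc (V x - v)) :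
    ⟪gradient V x, F + (g + δ) (u + w)⟫ ≤ -(η * gbar * θ * V x) :=
  stmt4_general n m n_z gbar δbar η θ v c hg hθ hv hvc γw γz γw_inv γz_inv hγw_mono hγz_mono hγw_inv
    hγz_inv fz fx hfz_mono αc hαc V x z u w F g δ hgmin hδnorm h1 h2 h3 h4 h5
end

section
/- Fix integers n, m, n_z ≥ 1 and constants ḡ > 0, δ̄ ≥ 0, η > 0, θ > 0 and 0 < v < c. Let γ^w, γ^z : [0,∞) → [0,∞) be continuous strictly increasing bijections, let f̄_z, f̄_x : [0,∞) → [0,∞) be nondecreasing, and let α_c : (−v,∞) → ℝ be strictly increasing. Let X ⊆ ℝ^n be open and V : X → [0,∞) continuously differentiable with ‖∇V(x)‖ ≥ η whenever x ∈ X and V(x) ≥ v, and suppose the gain condition α_c(((c−v)/c)·V(x)) ≥ θ·V(x) + (1/ḡ)·f̄_z((γ^z)⁻¹(V(x))) + (1 + δ̄/ḡ)·(γ^w)⁻¹(V(x)) + (1/ḡ)·f̄_x(‖x‖) holds for every x ∈ X with V(x) ≥ c. Let g be a real n×m matrix with λ_min(g·gᵀ) ≥ ḡ², let f : ℝ^{n_z}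 × ℝ^n → ℝ^n satisfy ‖f(z,x)‖ ≤ f̄_z(‖z‖) + f̄_x(‖x‖), and let δ : ℝ^{n_z} × ℝ^n → ℝ^{n×m} satisfy ‖δ(z,x)‖ ≤ δ̄. Let T ∈ (0,∞], let x : [0,T) → X be differentiable, and let z : [0,T) → ℝ^{n_z}, u, w : [0,T) → ℝ^m be functions with W := sup_{t∈[0,T)} ‖w(t)‖ < ∞ and Z := sup_{t∈[0,T)} ‖z(t)‖ < ∞, such that for every t ∈ [0,T): x′(t) = f(z(t),x(t)) + (g + δ(z(t),x(t)))·(u(t) + w(t)), and, whenever ∇V(x(t)) ≠ 0, ⟨gᵀ∇V(x(t))/‖gᵀ∇V(x(t))‖, u(t)⟩ + (δ̄/ḡ)·‖u(t)‖ ≤ −α_c(V(x(t)) − v). Then for every t ∈ [0,T): V(x(t)) ≤ max{ V(x(0))·e^{−η·ḡ·θ·t}, γ^w(W), γ^z(Z), c }. -/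
open scoped RealInnerProductSpace ENNReal

/-!
Wherever `V ≥ K := max (γw W) (max (γz Z) c)`, the control constraint absorbs the uncertainty
acting on `u`, the bound `ḡ ‖p‖ ≤ ‖gᵀ p‖` lets `‖gᵀ ∇V‖` dominate the drift and disturbance terms,
and the gain condition bounds what is left by `-θ V`. Hence `d/dt V(x) ≤ -‖gᵀ ∇V‖ θ V ≤ -η ḡ θ V`
above `K`, and a comparison with the barrier `max (V(x 0) e^{-η ḡ θ t}) K` concludes.
-/

section Comparison

open Set Filter Topology

variable {a b lam K C : ℝ}

theorem hasDerivWithinAt_max_mul_exp_Ici (hlam : 0 ≤ lam) (hK : 0 ≤ K) (s : ℝ) :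
    HasDerivWithinAt (fun y => max (C * Real.exp (-(lam * (y - a)))) K)
      (if K < C * Real.exp (-(lam * (s - a))) then -lam * (C * Real.exp (-(lam * (s - a))))
        else 0) (Ici s) s := by
  set E : ℝ → ℝ := fun y => C * Real.exp (-(lam * (y - a)))
  have hE : HasDerivAt E (-lam * E s) s := by
    have hlin : HasDerivAt (fun y => -(lam * (y - a))) (-lam) s := by
      simpa using (((hasDerivAt_id' s).sub_const a).const_mul lam).fun_neg
    exact (hlin.exp.const_mul C).congr_deriv (by ring)
  split_ifs with h
  · have hev : (fun y => max (E y) K) =ᶠ[𝓝 s] E :=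
      (hE.continuousAt.eventually_const_lt h).mono fun y hy => max_eq_left hy.le
    exact (hE.congr_of_eventuallyEq hev).hasDerivWithinAt
  · have hconst : ∀ y ∈ Ici s, max (E y) K = K := by
      intro y hy
      refine max_eq_right ?_
      rcases le_or_gt 0 C with hC | hC
      · refine le_trans ?_ (not_lt.1 h)
        have : lam * (s - a) ≤ lam * (y - a) := by gcongr; exact hy
        exact mul_le_mul_of_nonneg_left (Real.exp_le_exp.2 (by linarith)) hC
      · exact (mul_neg_of_neg_of_pos hC (Real.exp_pos _)).le.trans hK
    exact (hasDerivWithinAt_const s (Ici s) K).congr hconst (hconst s self_mem_Ici)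

theorem le_max_mul_exp_of_deriv_le_neg_mul {φ φ' : ℝ → ℝ} (hab : a ≤ b) (hlam : 0 < lam)
    (hK : 0 ≤ K) (hφ : ∀ s ∈ Icc a b, HasDerivWithinAt φ (φ' s) (Icc a b) s)
    (hdecay : ∀ s ∈ Ico a b, K ≤ φ s → φ' s ≤ -lam * φ s) :
    φ b ≤ max (φ a * Real.exp (-(lam * (b - a)))) K := by
  have hcont : ContinuousOn φ (Icc a b) := fun s hs => (hφ s hs).continuousWithinAt
  have hφ' : ∀ s ∈ Ico a b, HasDerivWithinAt φ (φ' s) (Ici s) s := fun s hs =>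
    ((hφ s (Ico_subset_Icc_self hs)).mono (Icc_subset_Icc_left hs.1)).mono_of_mem_nhdsWithin
      (Icc_mem_nhdsGE hs.2)
  -- The barrier is raised by `ε` so that at a contact point the derivatives compare strictly.
  refine le_of_forall_pos_le_add fun ε hε => ?_
  set E : ℝ → ℝ := fun y => φ a * Real.exp (-(lam * (y - a)))
  refine image_le_of_deriv_right_lt_deriv_boundary' hcont hφ' (B := fun y => max (E y) K + ε)
    ?_ (by fun_prop) (fun s _ => (hasDerivWithinAt_max_mul_exp_Ici hlam.le hK s).add_const ε)
    ?_ (right_mem_Icc.2 hab)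
  · simp only [E, sub_self, mul_zero, neg_zero, Real.exp_zero, mul_one]
    linarith [le_max_left (φ a) K]
  · intro s hs hφs
    have hKs : K + ε ≤ φ s := by rw [hφs]; gcongr; exact le_max_right _ _
    have hdec := hdecay s hs (by linarith)
    split_ifs with h
    · rw [hφs, max_eq_left h.le] at hdec
      linarith [mul_pos hlam hε]
    · linarith [mul_pos hlam (show 0 < φ s by linarith)]

end Comparison

section Margin

open Set

theorem StrictMonoOn.le_of_apply_le_rightInverse {γ γinv : ℝ → ℝ} {W r : ℝ}
    (hγ : StrictMonoOn γ (Ici 0))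
    (hinv : ∀ s ∈ Ici (0 : ℝ), γinv s ∈ Ici (0 : ℝ) ∧ γ (γinv s) = s)
    (hW : 0 ≤ W) (hr : 0 ≤ r) (h : γ W ≤ r) : W ≤ γinv r := by
  obtain ⟨hmem, heq⟩ := hinv r hr
  exact (hγ.le_iff_le hW hmem).1 (heq.symm ▸ h)

theorem StrictMonoOn.apply_mul_le_apply_sub {α : ℝ → ℝ} {v c r : ℝ}
    (hα : StrictMonoOn α (Ioi (-v))) (hv : 0 < v) (hvc : v < c) (hr : c ≤ r) :
    α ((c - v) / c * r) ≤ α (r - v) := by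
  have hc : 0 < c := hv.trans hvc
  refine hα.monotoneOn ?_ ?_ ?_
  · have : 0 ≤ (c - v) / c * r :=
      mul_nonneg (div_nonneg (sub_pos.2 hvc).le hc.le) (hc.le.trans hr)
    exact mem_Ioi.2 (by linarith)
  · exact mem_Ioi.2 (by linarith)
  · rw [div_mul_eq_mul_div, div_le_iff₀ hc]
    nlinarith

theorem drift_margin_le {gbar δbar θ v c W Z r ζ ξ dn wn : ℝ}
    {γw γz γw_inv γz_inv fz αc : ℝ → ℝ}
    (hg : 0 < gbar) (hδ0 : 0 ≤ δbar) (hv : 0 < v) (hvc : v < c)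
    (hγw_mono : StrictMonoOn γw (Ici 0)) (hγz_mono : StrictMonoOn γz (Ici 0))
    (hγw_inv : ∀ s ∈ Ici (0 : ℝ), γw_inv s ∈ Ici (0 : ℝ) ∧ γw (γw_inv s) = s)
    (hγz_inv : ∀ s ∈ Ici (0 : ℝ), γz_inv s ∈ Ici (0 : ℝ) ∧ γz (γz_inv s) = s)
    (hfz_mono : MonotoneOn fz (Ici 0)) (hαc : StrictMonoOn αc (Ioi (-v)))
    (hK : max (γw W) (max (γz Z) c) ≤ r)
    (hgain : θ * r + 1 / gbar * fz (γz_inv r) + (1 + δbar / gbar) * γw_inv r + 1 / gbar * ξ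
      ≤ αc ((c - v) / c * r))
    (hd : dn ≤ fz ζ + ξ) (hζ0 : 0 ≤ ζ) (hζ : ζ ≤ Z) (hw0 : 0 ≤ wn) (hw : wn ≤ W) :
    dn / gbar + (1 + δbar / gbar) * wn - αc (r - v) ≤ -(θ * r) := by
  have hcr : c ≤ r := (le_max_right _ _).trans ((le_max_right _ _).trans hK)
  have hr0 : 0 ≤ r := (hv.trans hvc).le.trans hcr
  have hwr : wn ≤ γw_inv r := hw.trans <| hγw_mono.le_of_apply_le_rightInverse hγw_inv
    (hw0.trans hw) hr0 ((le_max_left _ _).trans hK)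
  have hzr : fz ζ ≤ fz (γz_inv r) := hfz_mono hζ0 (hγz_inv r hr0).1 <| hζ.trans <|
    hγz_mono.le_of_apply_le_rightInverse hγz_inv (hζ0.trans hζ) hr0
      ((le_max_left _ _).trans ((le_max_right _ _).trans hK))
  have hα := hαc.apply_mul_le_apply_sub hv hvc hcr
  have hdr : dn / gbar ≤ 1 / gbar * fz (γz_inv r) + 1 / gbar * ξ := by
    rw [← mul_add, one_div_mul_eq_div]
    gcongr
    linarith
  have hwr' : (1 + δbar / gbar) * wn ≤ (1 + δbar / gbar) * γw_inv r := by gcongr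
  linarith

end Margin

section Lyapunov

open ContinuousLinearMap

variable {E F : Type*} [NormedAddCommGroup E] [InnerProductSpace ℝ E] [CompleteSpace E]

theorem HasGradientAt.comp_hasDerivWithinAt {V : E → ℝ} {p : E} {x : ℝ → E} {x' : E}
    {S : Set ℝ} {t : ℝ} (hV : HasGradientAt V p (x t)) (hx : HasDerivWithinAt x x' S t) :
    HasDerivWithinAt (fun s => V (x s)) ⟪p, x'⟫ S t := by
  simpa [Function.comp_def] using hV.hasFDerivAt.comp_hasDerivWithinAt t hx

variable [NormedAddCommGroup F] [InnerProductSpace ℝ F] [CompleteSpace F]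
  {g δ : F →L[ℝ] E} {p d : E} {u w : F} {gbar δbar a η θ r : ℝ}

theorem inner_drift_le (hg : 0 < gbar) (hgmin : gbar * ‖p‖ ≤ ‖adjoint g p‖) (hδ : ‖δ‖ ≤ δbar)
    (hu : ⟪‖adjoint g p‖⁻¹ • adjoint g p, u⟫ + δbar / gbar * ‖u‖ ≤ -a) :
    ⟪p, d + (g + δ) (u + w)⟫ ≤ ‖adjoint g p‖ * (‖d‖ / gbar + (1 + δbar / gbar) * ‖w‖ - a) := by
  set q := adjoint g p
  have hp : ‖p‖ ≤ ‖q‖ / gbar := by rw [le_div_iff₀ hg]; linarith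
  have hδ0 : 0 ≤ δbar := (norm_nonneg _).trans hδ
  have hexpand : ⟪p, d + (g + δ) (u + w)⟫ = ⟪p, d⟫ + ⟪q, u⟫ + ⟪q, w⟫ + ⟪p, δ (u + w)⟫ := by
    simp only [q, add_apply, map_add, inner_add_right, adjoint_inner_left]
    ring
  have hd : ⟪p, d⟫ ≤ ‖q‖ / gbar * ‖d‖ :=
    (real_inner_le_norm _ _).trans (by gcongr)
  have hqu : ⟪q, u⟫ ≤ ‖q‖ * (-a - δbar / gbar * ‖u‖) := by
    have : ⟪q, u⟫ = ‖q‖ * ⟪‖q‖⁻¹ • q, u⟫ := by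
      rcases eq_or_ne q 0 with hq | hq
      · simp [hq]
      · rw [real_inner_smul_left, mul_inv_cancel_left₀ (norm_ne_zero_iff.2 hq)]
    rw [this]
    gcongr
    linarith
  have hqw : ⟪q, w⟫ ≤ ‖q‖ * ‖w‖ := real_inner_le_norm _ _
  have hδuw : ⟪p, δ (u + w)⟫ ≤ ‖q‖ / gbar * (δbar * (‖u‖ + ‖w‖)) :=
    calc ⟪p, δ (u + w)⟫ ≤ ‖p‖ * (‖δ‖ * ‖u + w‖) :=
          (real_inner_le_norm _ _).trans (by gcongr; exact le_opNorm _ _)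
      _ ≤ ‖q‖ / gbar * (δbar * (‖u‖ + ‖w‖)) := by gcongr; exact norm_add_le _ _
  rw [hexpand]
  -- The `δbar / gbar * ‖u‖` in the control constraint pays for the `δ u` part of the last term.
  have : ‖q‖ * (‖d‖ / gbar + (1 + δbar / gbar) * ‖w‖ - a)
      = ‖q‖ / gbar * ‖d‖ + ‖q‖ * (-a - δbar / gbar * ‖u‖) + ‖q‖ * ‖w‖
        + ‖q‖ / gbar * (δbar * (‖u‖ + ‖w‖)) := by ring
  linarith

theorem inner_drift_le_neg_mul (hg : 0 < gbar) (hp : η ≤ ‖p‖)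
    (hgmin : gbar * ‖p‖ ≤ ‖adjoint g p‖) (hδ : ‖δ‖ ≤ δbar)
    (hu : ⟪‖adjoint g p‖⁻¹ • adjoint g p, u⟫ + δbar / gbar * ‖u‖ ≤ -a) (hθr : 0 ≤ θ * r)
    (hmargin : ‖d‖ / gbar + (1 + δbar / gbar) * ‖w‖ - a ≤ -(θ * r)) :
    ⟪p, d + (g + δ) (u + w)⟫ ≤ -(η * gbar * θ) * r :=
  calc ⟪p, d + (g + δ) (u + w)⟫
      ≤ ‖adjoint g p‖ * (‖d‖ / gbar + (1 + δbar / gbar) * ‖w‖ - a) := inner_drift_le hg hgmin hδ hu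
    _ ≤ ‖adjoint g p‖ * -(θ * r) := by gcongr
    _ ≤ gbar * η * -(θ * r) :=
        mul_le_mul_of_nonpos_right ((mul_le_mul_of_nonneg_left hp hg.le).trans hgmin)
          (neg_nonpos.2 hθr)
    _ = -(η * gbar * θ) * r := by ring

end Lyapunov

theorem stmt5_general (n m n_z : ℕ)
    (gbar δbar η θ v c : ℝ)
    (hg : 0 < gbar) (hη : 0 < η) (hθ : 0 < θ)
    (hv : 0 < v) (hvc : v < c)
    (γw γz γw_inv γz_inv : ℝ → ℝ)
    (hγw_mono : StrictMonoOn γw (Set.Ici 0))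
    (hγz_mono : StrictMonoOn γz (Set.Ici 0))
    (hγw_inv : ∀ s ∈ Set.Ici (0 : ℝ), γw_inv s ∈ Set.Ici (0 : ℝ) ∧ γw (γw_inv s) = s)
    (hγz_inv : ∀ s ∈ Set.Ici (0 : ℝ), γz_inv s ∈ Set.Ici (0 : ℝ) ∧ γz (γz_inv s) = s)
    (fz fx : ℝ → ℝ)
    (hfz_mono : MonotoneOn fz (Set.Ici 0))
    (αc : ℝ → ℝ) (hαc : StrictMonoOn αc (Set.Ioi (-v)))
    (X : Set (EuclideanSpace ℝ (Fin n))) (hX : IsOpen X)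
    (V : EuclideanSpace ℝ (Fin n) → ℝ)
    (hVreg : ContDiffOn ℝ 1 V X)
    (hgrad : ∀ y ∈ X, v ≤ V y → η ≤ ‖gradient V y‖)
    (hgain : ∀ y ∈ X, c ≤ V y →
      θ * V y + 1 / gbar * fz (γz_inv (V y)) + (1 + δbar / gbar) * γw_inv (V y)
        + 1 / gbar * fx ‖y‖ ≤ αc ((c - v) / c * V y))
    (g : EuclideanSpace ℝ (Fin m) →L[ℝ] EuclideanSpace ℝ (Fin n))
    (hgmin : ∀ p : EuclideanSpace ℝ (Fin n),
      gbar * ‖p‖ ≤ ‖ContinuousLinearMap.adjoint g p‖)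
    (f : EuclideanSpace ℝ (Fin n_z) → EuclideanSpace ℝ (Fin n) → EuclideanSpace ℝ (Fin n))
    (hf : ∀ z x, ‖f z x‖ ≤ fz ‖z‖ + fx ‖x‖)
    (δ : EuclideanSpace ℝ (Fin n_z) → EuclideanSpace ℝ (Fin n) →
      (EuclideanSpace ℝ (Fin m) →L[ℝ] EuclideanSpace ℝ (Fin n)))
    (hδ : ∀ z x, ‖δ z x‖ ≤ δbar)
    (T : ℝ≥0∞)
    (x : ℝ → EuclideanSpace ℝ (Fin n)) (z : ℝ → EuclideanSpace ℝ (Fin n_z))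
    (u w : ℝ → EuclideanSpace ℝ (Fin m))
    (W Z : ℝ)
    (hW : ∀ t : ℝ, 0 ≤ t → ENNReal.ofReal t < T → ‖w t‖ ≤ W)
    (hZ : ∀ t : ℝ, 0 ≤ t → ENNReal.ofReal t < T → ‖z t‖ ≤ Z)
    (hxX : ∀ t : ℝ, 0 ≤ t → ENNReal.ofReal t < T → x t ∈ X)
    (hode : ∀ t : ℝ, 0 ≤ t → ENNReal.ofReal t < T →
      HasDerivWithinAt x (f (z t) (x t) + (g + δ (z t) (x t)) (u t + w t))
        {s : ℝ | 0 ≤ s ∧ ENNReal.ofReal s < T} t)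
    (hu : ∀ t : ℝ, 0 ≤ t → ENNReal.ofReal t < T → gradient V (x t) ≠ 0 →
      ⟪(‖ContinuousLinearMap.adjoint g (gradient V (x t))‖)⁻¹ •
          ContinuousLinearMap.adjoint g (gradient V (x t)), u t⟫
        + δbar / gbar * ‖u t‖ ≤ -αc (V (x t) - v)) :
    ∀ t : ℝ, 0 ≤ t → ENNReal.ofReal t < T →
      V (x t) ≤ max (max (V (x 0) * Real.exp (-(η * gbar * θ * t))) (γw W))
        (max (γz Z) c) := by
  intro t ht htT
  set K := max (γw W) (max (γz Z) c)
  have hIcc : Set.Icc 0 t ⊆ {s : ℝ | 0 ≤ s ∧ ENNReal.ofReal s < T} := fun s hs =>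
    ⟨hs.1, (ENNReal.ofReal_le_ofReal hs.2).trans_lt htT⟩
  have hderiv : ∀ s ∈ Set.Icc 0 t, HasDerivWithinAt (fun s => V (x s))
      ⟪gradient V (x s), f (z s) (x s) + (g + δ (z s) (x s)) (u s + w s)⟫ (Set.Icc 0 t) s := by
    intro s hs
    obtain ⟨hs0, hsT⟩ := hIcc hs
    have hV := (hVreg.contDiffAt (hX.mem_nhds (hxX s hs0 hsT))).differentiableAt one_ne_zero
    exact hV.hasGradientAt.comp_hasDerivWithinAt ((hode s hs0 hsT).mono hIcc)
  have hdecay : ∀ s ∈ Set.Ico 0 t, K ≤ V (x s) →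
      ⟪gradient V (x s), f (z s) (x s) + (g + δ (z s) (x s)) (u s + w s)⟫
        ≤ -(η * gbar * θ) * V (x s) := by
    intro s hs hKs
    obtain ⟨hs0, hsT⟩ := hIcc (Set.Ico_subset_Icc_self hs)
    have hcV : c ≤ V (x s) := (le_max_right _ _).trans ((le_max_right _ _).trans hKs)
    have hp := hgrad _ (hxX s hs0 hsT) (hvc.le.trans hcV)
    refine inner_drift_le_neg_mul hg hp (hgmin _) (hδ _ _)
      (hu s hs0 hsT (norm_pos_iff.1 (hη.trans_le hp))) (mul_nonneg hθ.le ((hv.trans hvc).le.trans hcV)) ?_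
    exact drift_margin_le hg ((norm_nonneg _).trans (hδ (z s) (x s))) hv hvc hγw_mono hγz_mono
      hγw_inv hγz_inv hfz_mono hαc hKs (hgain _ (hxX s hs0 hsT) hcV) (hf _ _) (norm_nonneg _)
      (hZ s hs0 hsT) (norm_nonneg _) (hW s hs0 hsT)
  have hK : 0 ≤ K := le_max_of_le_right (le_max_of_le_right (hv.trans hvc).le)
  have := le_max_mul_exp_of_deriv_le_neg_mul ht (by positivity) hK hderiv hdecay
  rwa [sub_zero, ← max_assoc] at this

/-- Theorem 1, Property 2 of the paper: input-to-state practical safety of the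
relative-degree-one plant `ẋ = f(z,x) + (g + δ(z,x))(u + w)` along a differentiable
trajectory defined on `[0,T)` with `T ∈ (0,∞]` (modeled by `T : ℝ≥0∞`, the domain
being `{t | 0 ≤ t ∧ (t : ℝ≥0∞) < T}`). The eigenvalue condition `λ_min(g gᵀ) ≥ ḡ²`
is encoded by its equivalent form `‖gᵀ p‖ ≥ ḡ ‖p‖`; `W` and `Z` are (arbitrary,
hence in particular the least) upper bounds of `‖w‖` and `‖z‖` on the domain. -/
theorem stmt5 (n m n_z : ℕ) (hn : 1 ≤ n) (hm : 1 ≤ m) (hnz : 1 ≤ n_z)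
    (gbar δbar η θ v c : ℝ)
    (hg : 0 < gbar) (hδ0 : 0 ≤ δbar) (hη : 0 < η) (hθ : 0 < θ)
    (hv : 0 < v) (hvc : v < c)
    (γw γz γw_inv γz_inv : ℝ → ℝ)
    (hγw_cont : ContinuousOn γw (Set.Ici 0))
    (hγw_mono : StrictMonoOn γw (Set.Ici 0))
    (hγw_bij : Set.BijOn γw (Set.Ici 0) (Set.Ici 0))
    (hγz_cont : ContinuousOn γz (Set.Ici 0))
    (hγz_mono : StrictMonoOn γz (Set.Ici 0))
    (hγz_bij : Set.BijOn γz (Set.Ici 0) (Set.Ici 0))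
    (hγw_inv : ∀ s ∈ Set.Ici (0 : ℝ), γw_inv s ∈ Set.Ici (0 : ℝ) ∧ γw (γw_inv s) = s)
    (hγz_inv : ∀ s ∈ Set.Ici (0 : ℝ), γz_inv s ∈ Set.Ici (0 : ℝ) ∧ γz (γz_inv s) = s)
    (fz fx : ℝ → ℝ)
    (hfz_mono : MonotoneOn fz (Set.Ici 0)) (hfz0 : ∀ s ∈ Set.Ici (0 : ℝ), 0 ≤ fz s)
    (hfx_mono : MonotoneOn fx (Set.Ici 0)) (hfx0 : ∀ s ∈ Set.Ici (0 : ℝ), 0 ≤ fx s)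
    (αc : ℝ → ℝ) (hαc : StrictMonoOn αc (Set.Ioi (-v)))
    (X : Set (EuclideanSpace ℝ (Fin n))) (hX : IsOpen X)
    (V : EuclideanSpace ℝ (Fin n) → ℝ)
    (hVreg : ContDiffOn ℝ 1 V X) (hVnonneg : ∀ y ∈ X, 0 ≤ V y)
    (hgrad : ∀ y ∈ X, v ≤ V y → η ≤ ‖gradient V y‖)
    (hgain : ∀ y ∈ X, c ≤ V y →
      θ * V y + 1 / gbar * fz (γz_inv (V y)) + (1 + δbar / gbar) * γw_inv (V y)
        + 1 / gbar * fx ‖y‖ ≤ αc ((c - v) / c * V y))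
    (g : EuclideanSpace ℝ (Fin m) →L[ℝ] EuclideanSpace ℝ (Fin n))
    (hgmin : ∀ p : EuclideanSpace ℝ (Fin n),
      gbar * ‖p‖ ≤ ‖ContinuousLinearMap.adjoint g p‖)
    (f : EuclideanSpace ℝ (Fin n_z) → EuclideanSpace ℝ (Fin n) → EuclideanSpace ℝ (Fin n))
    (hf : ∀ z x, ‖f z x‖ ≤ fz ‖z‖ + fx ‖x‖)
    (δ : EuclideanSpace ℝ (Fin n_z) → EuclideanSpace ℝ (Fin n) →
      (EuclideanSpace ℝ (Fin m) →L[ℝ] EuclideanSpace ℝ (Fin n)))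
    (hδ : ∀ z x, ‖δ z x‖ ≤ δbar)
    (T : ℝ≥0∞) (hT : 0 < T)
    (x : ℝ → EuclideanSpace ℝ (Fin n)) (z : ℝ → EuclideanSpace ℝ (Fin n_z))
    (u w : ℝ → EuclideanSpace ℝ (Fin m))
    (W Z : ℝ)
    (hW : ∀ t : ℝ, 0 ≤ t → ENNReal.ofReal t < T → ‖w t‖ ≤ W)
    (hZ : ∀ t : ℝ, 0 ≤ t → ENNReal.ofReal t < T → ‖z t‖ ≤ Z)
    (hxX : ∀ t : ℝ, 0 ≤ t → ENNReal.ofReal t < T → x t ∈ X)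
    (hode : ∀ t : ℝ, 0 ≤ t → ENNReal.ofReal t < T →
      HasDerivWithinAt x (f (z t) (x t) + (g + δ (z t) (x t)) (u t + w t))
        {s : ℝ | 0 ≤ s ∧ ENNReal.ofReal s < T} t)
    (hu : ∀ t : ℝ, 0 ≤ t → ENNReal.ofReal t < T → gradient V (x t) ≠ 0 →
      ⟪(‖ContinuousLinearMap.adjoint g (gradient V (x t))‖)⁻¹ •
          ContinuousLinearMap.adjoint g (gradient V (x t)), u t⟫
        + δbar / gbar * ‖u t‖ ≤ -αc (V (x t) - v)) :
    ∀ t : ℝ, 0 ≤ t → ENNReal.ofReal t < T →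
      V (x t) ≤ max (max (V (x 0) * Real.exp (-(η * gbar * θ * t))) (γw W))
        (max (γz Z) c) :=
  stmt5_general n m n_z gbar δbar η θ v c hg hη hθ hv hvc γw γz γw_inv γz_inv hγw_mono hγz_mono
    hγw_inv hγz_inv fz fx hfz_mono αc hαc X hX V hVreg hgrad hgain g hgmin f hf δ hδ T x z u w W Z
    hW hZ hxX hode hu
end

section
/- For every integer m ≥ 1 and every constant c_A with 0 < c_A < 1, there exist an integer n_l > m and unit vectors l_1,…,l_{n_l} ∈ ℝ^m such that: (1) every subfamily of m of the vectors l_1,…,l_{n_l} is linearly independent; and (2) for every unit vector l_0 ∈ ℝ^m, the index set S = { i ∈ {1,…,n_l} : ⟨l_i, l_0⟩ ≥ c_A } has at least m elements, and l_0 is a linear combination with nonnegative coefficients of the vectors { l_i : i ∈ S }. -/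
/-!
Take a finite `δ`-net of the unit sphere and perturb its points one at a time so that each new
point avoids the finitely many proper subspaces spanned by fewer than `m` earlier points; this
gives a net in general position.

Fix a unit vector `l₀` and the cap `V'` of net points `v` with `c ≤ ⟪v, l₀⟫`. If `l₀` were not a
nonnegative combination of `V'`, the ray through `l₀` would miss the convex hull of `V'`, and
Hahn–Banach would give `y` with `⟪y, l₀⟫ ≥ 0` and `⟪y, v⟫ < 0` on `V'`. But the unit vector in
the direction of `a • l₀ + (1 - a) • y / ‖y‖`, `a = (1 + c) / 2`, is deep inside the cap and on
the positive side of `y`, and so is every net point close to it.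

If the cap held fewer than `m` points, their span would be proper, and a unit vector `l₁` close
to `l₀` outside that span would be a nonnegative combination of net points in a slightly smaller
cap around `l₁`, all of which lie in `V'`. The disjoint caps around `l₀` and `-l₀` then give at
least `2m` points.
-/

open scoped RealInnerProductSpace
open Metric Module MeasureTheory

section Avoidance

variable {E : Type*} [NormedAddCommGroup E] [NormedSpace ℝ E]

lemma NormedSpace.norm_normalize_sub_le {x : E} (hx : ‖x‖ = 1) (z : E) :
    ‖NormedSpace.normalize z - x‖ ≤ 2 * ‖z - x‖ := by
  have hz : ‖NormedSpace.normalize z - z‖ ≤ ‖z - x‖ := by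
    rcases eq_or_ne z 0 with rfl | hz0
    · simp [hx]
    · have hzn : 0 < ‖z‖ := norm_pos_iff.2 hz0
      calc ‖NormedSpace.normalize z - z‖ = ‖(‖z‖⁻¹ - 1) • z‖ := by
            rw [NormedSpace.normalize, sub_smul, one_smul]
        _ = |(‖z‖⁻¹ - 1) * ‖z‖| := by rw [norm_smul, Real.norm_eq_abs, abs_mul, abs_norm]
        _ = |‖x‖ - ‖z‖| := by rw [sub_mul, inv_mul_cancel₀ hzn.ne', one_mul, hx]
        _ ≤ ‖z - x‖ := by rw [abs_sub_comm]; exact abs_norm_sub_norm_le z x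
  linarith [norm_sub_le_norm_sub_add_norm_sub (NormedSpace.normalize z) z x]

variable [FiniteDimensional ℝ E]

lemma exists_mem_ball_forall_notMem_submodule (F : Finset (Submodule ℝ E))
    (hF : ∀ W ∈ F, W ≠ ⊤) (x : E) {r : ℝ} (hr : 0 < r) :
    ∃ z ∈ ball x r, ∀ W ∈ F, z ∉ W := by
  borelize E
  let μ : Measure E := Measure.addHaar
  have hnull : μ (⋃ W ∈ F, (W : Set E)) = 0 :=
    (measure_biUnion_null_iff F.countable_toSet).2 fun W hW ↦
      Measure.addHaar_submodule μ W (hF W hW)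
  obtain ⟨z, hz, hzF⟩ := nonempty_of_measure_ne_zero
    ((measure_sdiff_null hnull).trans_ne (measure_ball_pos μ x hr).ne')
  exact ⟨z, hz, fun W hW hzW ↦ hzF (Set.mem_biUnion hW hzW)⟩

lemma exists_norm_eq_one_forall_notMem_submodule (F : Finset (Submodule ℝ E))
    (hF : ∀ W ∈ F, W ≠ ⊤) {x : E} (hx : ‖x‖ = 1) {r : ℝ} (hr : 0 < r) :
    ∃ y, ‖y‖ = 1 ∧ ‖y - x‖ < r ∧ ∀ W ∈ F, y ∉ W := by
  classical
  have : Nontrivial E := ⟨x, 0, norm_ne_zero_iff.1 (by simp [hx])⟩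
  obtain ⟨z, hzx, hzF⟩ := exists_mem_ball_forall_notMem_submodule (insert ⊥ F)
    ((Finset.forall_mem_insert _ _ _).2 ⟨bot_ne_top, hF⟩) x (half_pos hr)
  have hz0 : z ≠ 0 := fun h ↦ hzF ⊥ (Finset.mem_insert_self _ _) (by simp [h])
  refine ⟨NormedSpace.normalize z, NormedSpace.norm_normalize hz0, ?_,
    fun W hW hzW ↦ hzF W (Finset.mem_insert_of_mem hW) ?_⟩
  · rw [mem_ball, dist_eq_norm] at hzx
    linarith [NormedSpace.norm_normalize_sub_le hx z]
  · rw [← NormedSpace.norm_smul_normalize z]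
    exact W.smul_mem _ hzW

end Avoidance

section GeneralPosition

variable {E : Type*} [AddCommGroup E] [Module ℝ E]

def InGeneralPosition (s : Set E) : Prop :=
  ∀ t : Finset E, ↑t ⊆ s → t.card ≤ finrank ℝ E → LinearIndepOn ℝ id (t : Set E)

lemma inGeneralPosition_empty : InGeneralPosition (∅ : Set E) := by
  intro t ht _
  rw [Set.subset_empty_iff.1 ht]
  exact linearIndepOn_empty ℝ id

lemma InGeneralPosition.insert_of_notMem_span {s : Set E} (hs : InGeneralPosition s) {y : E}
    (hy : ∀ t : Finset E, ↑t ⊆ s → t.card < finrank ℝ E → y ∉ Submodule.span ℝ (t : Set E)) :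
    InGeneralPosition (insert y s) := by
  classical
  intro t ht hcard
  by_cases hyt : y ∈ t
  · have hsub : ↑(t.erase y) ⊆ s := fun z hz ↦
      (Set.mem_insert_iff.1 (ht (Finset.mem_of_mem_erase hz))).resolve_left
        (Finset.ne_of_mem_erase hz)
    have hlt : (t.erase y).card < finrank ℝ E := by
      rw [Finset.card_erase_of_mem hyt]
      have := Finset.card_pos.2 ⟨y, hyt⟩
      omega
    rw [← Finset.insert_erase hyt, Finset.coe_insert]
    exact (hs _ hsub hlt.le).insert (by rw [Set.image_id]; exact hy _ hsub hlt)
  · refine hs t (fun z hz ↦ ?_) hcard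
    exact (Set.mem_insert_iff.1 (ht hz)).resolve_left (ne_of_mem_of_not_mem hz hyt)

lemma Submodule.span_finset_ne_top_of_card_lt {t : Finset E} (ht : t.card < finrank ℝ E) :
    Submodule.span ℝ (t : Set E) ≠ ⊤ := fun htop ↦ by
  have := finrank_span_finset_le_card (R := ℝ) t
  rw [Set.finrank, htop, finrank_top] at this
  omega

lemma InGeneralPosition.linearIndependent {s : Set E} (hs : InGeneralPosition s) {ι : Type*}
    [Fintype ι] (hι : Fintype.card ι ≤ finrank ℝ E) {v : ι → E} (hv : Function.Injective v)
    (hvs : ∀ i, v i ∈ s) : LinearIndependent ℝ v := by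
  classical
  have h := hs (Finset.univ.image v) (by simpa [Set.range_subset_iff] using hvs)
    (Finset.card_image_le.trans hι)
  rw [Finset.coe_image, Finset.coe_univ, Set.image_univ] at h
  exact (linearIndepOn_id_range_iff hv).1 h

end GeneralPosition

section GeneralPositionNet

variable {E : Type*} [NormedAddCommGroup E] [NormedSpace ℝ E] [FiniteDimensional ℝ E]

lemma InGeneralPosition.exists_insert {s : Finset E} (hs : InGeneralPosition (s : Set E))
    {x : E} (hx : ‖x‖ = 1) {r : ℝ} (hr : 0 < r) :
    ∃ y, ‖y‖ = 1 ∧ ‖y - x‖ < r ∧ InGeneralPosition (insert y (s : Set E)) := by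
  classical
  let F := (s.powerset.filter (·.card < finrank ℝ E)).image
    fun t : Finset E ↦ Submodule.span ℝ (t : Set E)
  have hF : ∀ W ∈ F, W ≠ ⊤ := by
    simp only [F, Finset.mem_image, Finset.mem_filter, Finset.mem_powerset]
    rintro _ ⟨t, ⟨-, ht⟩, rfl⟩
    exact Submodule.span_finset_ne_top_of_card_lt ht
  obtain ⟨y, hy, hyx, hyF⟩ := exists_norm_eq_one_forall_notMem_submodule F hF hx hr
  refine ⟨y, hy, hyx, hs.insert_of_notMem_span fun t ht hcard ↦ hyF _ ?_⟩
  exact Finset.mem_image_of_mem _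
    (Finset.mem_filter.2 ⟨Finset.mem_powerset.2 (by exact_mod_cast ht), hcard⟩)

lemma exists_inGeneralPosition_near (T : Finset E) (hT : ∀ x ∈ T, ‖x‖ = 1) {r : ℝ}
    (hr : 0 < r) :
    ∃ V : Finset E, (∀ v ∈ V, ‖v‖ = 1) ∧ InGeneralPosition (V : Set E) ∧
      ∀ x ∈ T, ∃ v ∈ V, ‖v - x‖ < r := by
  classical
  induction T using Finset.induction_on with
  | empty => exact ⟨∅, by simp, by simpa using inGeneralPosition_empty, by simp⟩
  | insert x T _ ih =>
    rw [Finset.forall_mem_insert] at hT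
    obtain ⟨V, hV, hVgp, hVT⟩ := ih hT.2
    obtain ⟨y, hy, hyx, hgp⟩ := hVgp.exists_insert hT.1 hr
    refine ⟨insert y V, (Finset.forall_mem_insert _ _ _).2 ⟨hy, hV⟩, by simpa using hgp, ?_⟩
    rw [Finset.forall_mem_insert]
    exact ⟨⟨y, Finset.mem_insert_self _ _, hyx⟩, fun z hz ↦
      (hVT z hz).imp fun v ⟨hv, hvz⟩ ↦ ⟨Finset.mem_insert_of_mem hv, hvz⟩⟩

lemma exists_inGeneralPosition_net {δ : ℝ} (hδ : 0 < δ) :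
    ∃ V : Finset E, (∀ v ∈ V, ‖v‖ = 1) ∧ InGeneralPosition (V : Set E) ∧
      ∀ w : E, ‖w‖ = 1 → ∃ v ∈ V, ‖v - w‖ < δ := by
  obtain ⟨T, hTS, hTfin, hcover⟩ :=
    finite_cover_balls_of_compact (isCompact_sphere (0 : E) 1) (half_pos hδ)
  obtain ⟨V, hV, hVgp, hVT⟩ := exists_inGeneralPosition_near hTfin.toFinset
    (fun x hx ↦ by simpa using hTS (hTfin.mem_toFinset.1 hx)) (half_pos hδ)
  refine ⟨V, hV, hVgp, fun w hw ↦ ?_⟩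
  obtain ⟨x, hxT, hwx⟩ := Set.mem_iUnion₂.1 (hcover (mem_sphere_zero_iff_norm.2 hw))
  obtain ⟨v, hv, hvx⟩ := hVT x (hTfin.mem_toFinset.2 hxT)
  rw [mem_ball, dist_eq_norm] at hwx
  exact ⟨v, hv, by linarith [norm_sub_le_norm_sub_add_norm_sub v x w, norm_sub_rev x w]⟩

end GeneralPositionNet

section Cone

variable {E : Type*} [NormedAddCommGroup E] [InnerProductSpace ℝ E]

lemma real_inner_sub_inner_le (x y z : E) : ⟪x, z⟫ - ⟪y, z⟫ ≤ ‖x - y‖ * ‖z‖ := by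
  rw [← inner_sub_left]
  exact real_inner_le_norm _ _

lemma real_inner_le_inner_normalize {u z : E} (hu : ‖u‖ ≤ 1) (huz : 0 ≤ ⟪u, z⟫) :
    ⟪u, z⟫ ≤ ⟪NormedSpace.normalize u, z⟫ := by
  rw [NormedSpace.normalize, real_inner_smul_left]
  rcases eq_or_ne u 0 with rfl | hu0
  · simp
  · exact le_mul_of_one_le_left huz ((one_le_inv₀ (norm_pos_iff.2 hu0)).2 hu)

lemma exists_norm_eq_one_le_inner {l₀ y : E} (hl₀ : ‖l₀‖ = 1) (hy : 0 ≤ ⟪y, l₀⟫) {a : ℝ}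
    (ha0 : 0 < a) (ha1 : a ≤ 1) :
    ∃ w : E, ‖w‖ = 1 ∧ a ≤ ⟪w, l₀⟫ ∧ (1 - a) * ‖y‖ ≤ ⟪w, y⟫ := by
  set n := NormedSpace.normalize y
  have hn : ‖n‖ ≤ 1 := by
    rcases eq_or_ne y 0 with rfl | hy0
    · simp [n]
    · exact (NormedSpace.norm_normalize hy0).le
  have hnl : 0 ≤ ⟪n, l₀⟫ := by
    simp only [n, NormedSpace.normalize, real_inner_smul_left]
    positivity
  have hny : ⟪n, y⟫ = ‖y‖ := by
    simp only [n, NormedSpace.normalize, real_inner_smul_left, real_inner_self_eq_norm_sq]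
    rcases eq_or_ne ‖y‖ 0 with h | h
    · simp [h]
    · field_simp
  set u := a • l₀ + (1 - a) • n
  have hu : ‖u‖ ≤ 1 := calc
    ‖u‖ ≤ ‖a • l₀‖ + ‖(1 - a) • n‖ := norm_add_le _ _
    _ = a + (1 - a) * ‖n‖ := by
      rw [norm_smul, norm_smul, Real.norm_of_nonneg ha0.le, Real.norm_of_nonneg (by linarith),
        hl₀, mul_one]
    _ ≤ 1 := by nlinarith
  have hul : a ≤ ⟪u, l₀⟫ := by
    rw [inner_add_left, real_inner_smul_left, real_inner_smul_left, real_inner_self_eq_norm_sq,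
      hl₀]
    nlinarith
  have huy : (1 - a) * ‖y‖ ≤ ⟪u, y⟫ := by
    rw [inner_add_left, real_inner_smul_left, real_inner_smul_left, hny, real_inner_comm]
    nlinarith
  have hu0 : u ≠ 0 := by
    rintro h
    rw [h, inner_zero_left] at hul
    linarith
  exact ⟨NormedSpace.normalize u, NormedSpace.norm_normalize hu0,
    hul.trans (real_inner_le_inner_normalize hu (ha0.le.trans hul)),
    huy.trans (real_inner_le_inner_normalize hu ((by positivity : 0 ≤ (1 - a) * ‖y‖).trans huy))⟩

variable [FiniteDimensional ℝ E]

lemma exists_inner_nonneg_forall_inner_neg {K : Set E} (hKconv : Convex ℝ K)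
    (hKcomp : IsCompact K) {l₀ : E} (hK : ∀ t : ℝ, 0 ≤ t → t • l₀ ∉ K) :
    ∃ y : E, 0 ≤ ⟪y, l₀⟫ ∧ ∀ x ∈ K, ⟪y, x⟫ < 0 := by
  let ray := LinearMap.toSpanSingleton ℝ E l₀ '' Set.Ici 0
  have hdisj : Disjoint K ray :=
    Set.disjoint_left.2 fun x hxK ⟨t, ht, hx⟩ ↦ hK t ht (by rw [← hx] at hxK; exact hxK)
  obtain ⟨f, u, v, hfK, huv, hfray⟩ := geometric_hahn_banach_compact_closed hKconv hKcomp
    ((convex_Ici 0).linear_image _) (isClosedMap_smul_left l₀ _ isClosed_Ici) hdisj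
  have hv : v < 0 := by simpa using hfray 0 ⟨0, Set.self_mem_Ici, by simp⟩
  refine ⟨(InnerProductSpace.toDual ℝ E).symm f, ?_, fun x hx ↦ ?_⟩
  · rw [InnerProductSpace.toDual_symm_apply]
    by_contra! hneg
    have := hfray ((v / f l₀) • l₀) ⟨v / f l₀, div_nonneg_of_nonpos hv.le hneg.le, rfl⟩
    rw [map_smul, smul_eq_mul, div_mul_cancel₀ _ hneg.ne] at this
    exact lt_irrefl _ this
  · rw [InnerProductSpace.toDual_symm_apply]
    linarith [hfK x hx]

lemma mem_hull_filter_of_net {V : Finset E} {c δ : ℝ} (hc : 0 < c) (hδ : δ ≤ (1 - c) / 2)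
    (hnet : ∀ w : E, ‖w‖ = 1 → ∃ v ∈ V, ‖v - w‖ < δ) {l₀ : E} (hl₀ : ‖l₀‖ = 1) :
    l₀ ∈ PointedCone.hull ℝ (V.filter (c ≤ ⟪·, l₀⟫) : Set E) := by
  set V' := V.filter (c ≤ ⟪·, l₀⟫)
  have hc1 : c < 1 := by
    obtain ⟨v, -, hv⟩ := hnet l₀ hl₀
    linarith [norm_nonneg (v - l₀)]
  have hK : convexHull ℝ (V' : Set E) ⊆ {x | c ≤ ⟪l₀, x⟫} :=
    convexHull_min (fun v hv ↦ by simpa [real_inner_comm, V'] using (Finset.mem_filter.1 hv).2)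
      (convex_halfSpace_ge (𝕜 := ℝ) (innerₗ E l₀).isLinear c)
  by_contra hnot
  have hray : ∀ t : ℝ, 0 ≤ t → t • l₀ ∉ convexHull ℝ (V' : Set E) := fun t ht0 htK ↦ hnot <| by
    have ht : c ≤ t := by
      simpa [real_inner_smul_right, real_inner_self_eq_norm_sq, hl₀] using hK htK
    have hmem := (PointedCone.hull ℝ (V' : Set E)).smul_mem (inv_nonneg.2 ht0)
      (convexHull_min PointedCone.subset_hull (PointedCone.convex _) htK)
    rwa [smul_smul, inv_mul_cancel₀ (by linarith), one_smul] at hmem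
  obtain ⟨y, hy0, hyK⟩ := exists_inner_nonneg_forall_inner_neg (convex_convexHull ℝ _)
    (V'.finite_toSet.isCompact_convexHull ℝ) hray
  obtain ⟨w, hw, hwl, hwy⟩ := exists_norm_eq_one_le_inner hl₀ hy0 (a := (1 + c) / 2)
    (by linarith) (by linarith)
  obtain ⟨v, hv, hvw⟩ := hnet w hw
  rw [norm_sub_rev] at hvw
  have hvl := real_inner_sub_inner_le w v l₀
  have hvy := real_inner_sub_inner_le w v y
  have hvV' : v ∈ V' := Finset.mem_filter.2 ⟨hv, by rw [hl₀] at hvl; linarith⟩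
  have := hyK v (subset_convexHull ℝ _ hvV')
  rw [real_inner_comm] at this
  nlinarith [mul_le_mul_of_nonneg_right hvw.le (norm_nonneg y)]

lemma finrank_le_card_filter_of_net {V : Finset E} (hV : ∀ v ∈ V, ‖v‖ = 1) {c δ : ℝ}
    (hc : 0 < c) (hδ : δ ≤ (1 - c) / 4) (hnet : ∀ w : E, ‖w‖ = 1 → ∃ v ∈ V, ‖v - w‖ < δ)
    {l₀ : E} (hl₀ : ‖l₀‖ = 1) : finrank ℝ E ≤ (V.filter (c ≤ ⟪·, l₀⟫)).card := by
  set V' := V.filter (c ≤ ⟪·, l₀⟫)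
  by_contra! hlt
  have hc1 : c < 1 := by
    obtain ⟨v, -, hv⟩ := hnet l₀ hl₀
    linarith [norm_nonneg (v - l₀)]
  obtain ⟨l₁, hl₁, hl₁l₀, hl₁W⟩ := exists_norm_eq_one_forall_notMem_submodule
    {Submodule.span ℝ (V' : Set E)} (by simpa using Submodule.span_finset_ne_top_of_card_lt hlt)
    hl₀ (r := (1 - c) / 2) (by linarith)
  refine hl₁W _ (Finset.mem_singleton_self _) (Submodule.span_mono ?_
    (PointedCone.hull_le_span ℝ _ (mem_hull_filter_of_net (c := (1 + c) / 2) (by linarith)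
      (by linarith) hnet hl₁)))
  intro v hv
  rw [Finset.coe_filter] at hv
  have := real_inner_sub_inner_le l₁ l₀ v
  rw [hV v hv.1, mul_one, real_inner_comm v l₁, real_inner_comm v l₀] at this
  exact Finset.mem_filter.2 ⟨hv.1, by linarith [hv.2]⟩

lemma two_mul_finrank_le_card_of_net [Nontrivial E] {V : Finset E} (hV : ∀ v ∈ V, ‖v‖ = 1)
    {c δ : ℝ} (hc : 0 < c) (hδ : δ ≤ (1 - c) / 4)
    (hnet : ∀ w : E, ‖w‖ = 1 → ∃ v ∈ V, ‖v - w‖ < δ) : 2 * finrank ℝ E ≤ V.card := by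
  classical
  obtain ⟨e, he⟩ := exists_norm_eq E zero_le_one
  have hdisj : Disjoint (V.filter (c ≤ ⟪·, e⟫)) (V.filter (c ≤ ⟪·, -e⟫)) :=
    Finset.disjoint_filter.2 fun v _ h₁ h₂ ↦ by rw [inner_neg_right] at h₂; linarith
  calc 2 * finrank ℝ E
      ≤ (V.filter (c ≤ ⟪·, e⟫)).card + (V.filter (c ≤ ⟪·, -e⟫)).card := by
        rw [two_mul]
        exact add_le_add (finrank_le_card_filter_of_net hV hc hδ hnet he)
          (finrank_le_card_filter_of_net hV hc hδ hnet (by rwa [norm_neg]))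
    _ ≤ V.card := by
        rw [← Finset.card_union_of_disjoint hdisj]
        exact Finset.card_le_card
          (Finset.union_subset (Finset.filter_subset _ _) (Finset.filter_subset _ _))

end Cone

lemma Finset.sum_equivFin_symm {α M : Type*} [AddCommMonoid M] (s : Finset α) (f : α → M) :
    ∑ i, f (s.equivFin.symm i) = ∑ a ∈ s, f a := by
  rw [← s.sum_coe_sort f]
  exact Equiv.sum_comp s.equivFin.symm fun a ↦ f a

lemma Finset.ncard_setOf_equivFin_symm {α : Type*} (s : Finset α) (p : α → Prop)
    [DecidablePred p] : {i | p (s.equivFin.symm i)}.ncard = (s.filter p).card := by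
  have hinj : Function.Injective fun i ↦ (s.equivFin.symm i : α) :=
    Subtype.val_injective.comp s.equivFin.symm.injective
  have hrange : ((s.filter p : Finset α) : Set α) ⊆ Set.range fun i ↦ (s.equivFin.symm i : α) :=
    fun a ha ↦ ⟨s.equivFin ⟨a, (Finset.mem_filter.1 ha).1⟩, by simp⟩
  have hpre : {i | p (s.equivFin.symm i)} =
      (fun i ↦ (s.equivFin.symm i : α)) ⁻¹' ↑(s.filter p) := by
    ext i
    simp
  rw [hpre, Set.ncard_preimage_of_injective_subset_range hinj hrange, Set.ncard_coe_finset]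

lemma exists_nonneg_coeffs_of_mem_hull {E : Type*} [AddCommGroup E] [Module ℝ E]
    {s V : Finset E} (hsV : s ⊆ V) {x : E} (hx : x ∈ PointedCone.hull ℝ (s : Set E)) :
    ∃ g : E → ℝ, (∀ v, 0 ≤ g v) ∧ (∀ v, g v ≠ 0 → v ∈ s) ∧ x = ∑ v ∈ V, g v • v := by
  obtain ⟨f, hf, rfl⟩ := Submodule.mem_span_finset.1 hx
  have hf' : ∀ v, (f v : ℝ) ≠ 0 → v ∈ s := fun v hv ↦ hf fun h ↦ hv (by rw [h]; rfl)
  refine ⟨fun v ↦ f v, fun v ↦ (f v).2, hf', ?_⟩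
  rw [← Finset.sum_subset hsV fun v _ hvs ↦ by
    show (f v : ℝ) • v = 0
    rw [not_imp_comm.1 (hf' v) hvs, zero_smul]]
  rfl

/-- Lemma 3 of the paper: for every `m ≥ 1` and `0 < c_A < 1` there is a positive
basis of unit vectors of `ℝ^m`, in general position (every `m` of them are linearly
independent), such that every unit vector `l₀` is a nonnegative combination of the
basis vectors `l i` with `⟪l i, l₀⟫ ≥ c_A`, of which there are at least `m`. -/
theorem stmt8 (m : ℕ) (hm : 1 ≤ m) (cA : ℝ) (hcA0 : 0 < cA) (hcA1 : cA < 1) :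
    ∃ n_l : ℕ, m < n_l ∧
      ∃ l : Fin n_l → EuclideanSpace ℝ (Fin m),
        (∀ i, ‖l i‖ = 1) ∧
        (∀ f : Fin m → Fin n_l, Function.Injective f → LinearIndependent ℝ (l ∘ f)) ∧
        (∀ l0 : EuclideanSpace ℝ (Fin m), ‖l0‖ = 1 →
          m ≤ {i : Fin n_l | cA ≤ ⟪l i, l0⟫}.ncard ∧
          ∃ coef : Fin n_l → ℝ, (∀ i, 0 ≤ coef i) ∧
            (∀ i, coef i ≠ 0 → cA ≤ ⟪l i, l0⟫) ∧ l0 = ∑ i, coef i • l i) := by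
  have hdim : finrank ℝ (EuclideanSpace ℝ (Fin m)) = m := finrank_euclideanSpace_fin
  have : Nontrivial (EuclideanSpace ℝ (Fin m)) :=
    Module.nontrivial_of_finrank_pos (R := ℝ) (by rw [hdim]; omega)
  obtain ⟨V, hV, hVgp, hnet⟩ := exists_inGeneralPosition_net (E := EuclideanSpace ℝ (Fin m))
    (δ := (1 - cA) / 4) (by linarith)
  have hcard := hdim ▸ two_mul_finrank_le_card_of_net hV hcA0 le_rfl hnet
  let l i := (V.equivFin.symm i : EuclideanSpace ℝ (Fin m))
  refine ⟨V.card, by omega, l, fun i ↦ hV _ (V.equivFin.symm i).2, fun f hf ↦ ?_,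
    fun l0 hl0 ↦ ⟨?_, ?_⟩⟩
  · exact hVgp.linearIndependent (by simp [hdim])
      (Subtype.val_injective.comp (V.equivFin.symm.injective.comp hf))
      fun k ↦ (V.equivFin.symm (f k)).2
  · exact hdim.symm.trans_le ((finrank_le_card_filter_of_net hV hcA0 le_rfl hnet hl0).trans_eq
      (V.ncard_setOf_equivFin_symm _).symm)
  · obtain ⟨g, hg0, hgs, hsum⟩ := exists_nonneg_coeffs_of_mem_hull (Finset.filter_subset _ V)
      (mem_hull_filter_of_net hcA0 (by linarith) hnet hl0)
    exact ⟨fun i ↦ g (l i), fun i ↦ hg0 _, fun i hi ↦ (Finset.mem_filter.1 (hgs _ hi)).2,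
      hsum.trans (V.sum_equivFin_symm fun v ↦ g v • v).symm⟩
end

section
/- Fix integers n_u ≥ 1, n_c ≥ 1, n_l ≥ 1 and constants 0 ≤ c̄ < 1, k_φ ≥ 0, and c_A ∈ (0,1) with c_A > cos(π/2 − arccos(√(1−c̄²))); set c̄_A = cos(arccos(√(1−c̄²)) + arccos(c_A)). Let A be a real n_c×n_u matrix whose rows a_1,…,a_{n_c} are unit vectors, let b ∈ ℝ^{n_c} and c ∈ ℝ^{n_c} with 0 ≤ c_j ≤ c̄ for all j, and define U_c = { u ∈ ℝ^{n_u} : ⟨a_j, u⟩ + c_j·‖u‖ ≤ b_j for all j = 1,…,n_c }. Let s ∈ U_c. Let A_L be a real n_l×n_u matrix whose rows l_1,…,l_{n_l} are unit vectors such that for every unit vector l_0 ∈ ℝ^{n_u}, the index set S = { i : ⟨l_i, l_0⟩ ≥ c_A } has at least n_u elements and l_0 is a nonnegative linear combination of { l_i : i ∈ S }. Define b_L ∈ ℝ^{n_l} by (b_L)_i = ⟨l_i, s⟩ + min over j = 1,…,n_c of [ max(⟨l_i, a_j⟩, c̄_A)·(b_j − ⟨a_j, s⟩ − c_j·‖s‖)/(1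 + c_j) + max(k_φ·(c̄_A − ⟨l_i, a_j⟩), 0) ]. Then, with U_L = { u ∈ ℝ^{n_u} : ⟨l_i, u⟩ ≤ (b_L)_i for all i = 1,…,n_l }, one has s ∈ U_L and U_L ⊆ U_c. -/
open scoped RealInnerProductSpace

/-!
Write `v = u - s` and `d_j = (b_j - ⟪a_j, s⟫ - c_j ‖s‖) / (1 + c_j) ≥ 0`. The normal
`m = a_j + c_j • v / ‖v‖` of the `j`-th cone constraint in the direction of `v` makes an angle
at most `arccos √(1 - c̄²)` with `a_j`. Expanding `m / ‖m‖` positively in rows `l_i` within angle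
`arccos c_A` of it, each such `l_i` is within angle `arccos √(1 - c̄²) + arccos c_A < π / 2`
of `a_j`, so `⟪l_i, a_j⟫ ≥ c̄_A`, and the `j`-th term of `(b_L)_i` collapses to
`⟪l_i, s⟫ + ⟪l_i, a_j⟫ d_j`. Summing these constraints gives `⟪m, v - d_j • a_j⟫ ≤ 0`, which is
the `j`-th quadratic constraint at `u`. Since `c̄_A > 0`, every term of `b_L` is nonnegative,
so `s ∈ U_L`.
-/

open Real InnerProductGeometry

section

variable {E : Type*} [NormedAddCommGroup E] [InnerProductSpace ℝ E] {ι : Type*} [Fintype ι]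

theorem InnerProductGeometry.angle_le_arccos_of_le_inner {x y : E} {p : ℝ}
    (hx : ‖x‖ = 1) (hy : ‖y‖ = 1) (hp : p ≤ ⟪x, y⟫) : angle x y ≤ arccos p := by
  simpa [angle, hx, hy] using arccos_le_arccos hp

theorem cos_arccos_add_arccos_le_inner {x y z : E} {p q : ℝ}
    (hx : ‖x‖ = 1) (hy : ‖y‖ = 1) (hz : ‖z‖ = 1) (hp : p ≤ ⟪x, y⟫) (hq : q ≤ ⟪y, z⟫)
    (hpq : arccos p + arccos q ≤ π) : cos (arccos p + arccos q) ≤ ⟪x, z⟫ := by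
  have hxz : angle x z ≤ arccos p + arccos q :=
    (angle_le_angle_add_angle x y z).trans (add_le_add
      (angle_le_arccos_of_le_inner hx hy hp) (angle_le_arccos_of_le_inner hy hz hq))
  rw [inner_eq_cos_angle_of_norm_eq_one hx hz]
  exact cos_le_cos_of_nonneg_of_le_pi (angle_nonneg x z) hpq hxz

/-- Tilting a unit vector `a` by `c • e` moves its direction by an angle of at most
`arcsin c`. -/
theorem sqrt_one_sub_sq_mul_norm_le_inner_add_smul {a e : E} {c : ℝ}
    (ha : ‖a‖ = 1) (he : ‖e‖ = 1) (hc0 : 0 ≤ c) (hc1 : c ≤ 1) :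
    √(1 - c ^ 2) * ‖a + c • e‖ ≤ ⟪a + c • e, a⟫ := by
  set t := ⟪a, e⟫
  have ht : |t| ≤ 1 := by simpa [ha, he] using abs_real_inner_le_norm a e
  have hnorm : ‖a + c • e‖ ^ 2 = 1 + 2 * c * t + c ^ 2 := by
    rw [norm_add_sq_real, inner_smul_right, norm_smul, ha, he, Real.norm_of_nonneg hc0]
    ring
  have hinner : ⟪a + c • e, a⟫ = 1 + c * t := by
    rw [inner_add_left, inner_smul_left, real_inner_self_eq_norm_sq, ha, real_inner_comm]
    simp [t]
  have ht' := abs_le.mp ht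
  rw [hinner, ← pow_le_pow_iff_left₀ (by positivity) (by nlinarith) two_ne_zero, mul_pow,
    sq_sqrt (by nlinarith), hnorm]
  -- the difference of the two sides is `c² (t + c)²`
  nlinarith [sq_nonneg (c * (t + c))]

theorem inner_nonpos_of_eq_sum_smul {l : ι → E} {coef : ι → ℝ}
    {w e : E} (hw : w = ∑ i, coef i • l i) (hcoef : ∀ i, 0 ≤ coef i)
    (he : ∀ i, coef i ≠ 0 → ⟪l i, e⟫ ≤ 0) : ⟪w, e⟫ ≤ 0 := by
  rw [hw, sum_inner]
  refine Finset.sum_nonpos fun i _ => ?_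
  rw [inner_smul_left]
  by_cases hi : coef i = 0
  · simp [hi]
  · exact mul_nonpos_of_nonneg_of_nonpos (hcoef i) (he i hi)

def PositivelySpansNear (l : ι → E) (cA : ℝ) : Prop :=
  ∀ w : E, ‖w‖ = 1 → ∃ coef : ι → ℝ, (∀ i, 0 ≤ coef i) ∧
    (∀ i, coef i ≠ 0 → cA ≤ ⟪l i, w⟫) ∧ w = ∑ i, coef i • l i

theorem inner_add_mul_norm_le_of_positivelySpansNear {l : ι → E}
    {a v : E} {c d α cA : ℝ} (ha : ‖a‖ = 1) (hl : ∀ i, ‖l i‖ = 1)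
    (hc0 : 0 ≤ c) (hc1 : c < 1) (hd : 0 ≤ d) (hα : α ≤ √(1 - c ^ 2))
    (hspan : PositivelySpansNear l cA) (hangle : arccos α + arccos cA ≤ π)
    (hv : ∀ i, cos (arccos α + arccos cA) ≤ ⟪l i, a⟫ → ⟪l i, v⟫ ≤ ⟪l i, a⟫ * d) :
    ⟪a, v⟫ + c * ‖v‖ ≤ (1 + c) * d := by
  rcases eq_or_ne v 0 with rfl | hv0
  · simpa using mul_nonneg (by linarith) hd
  -- `m` is the outward normal of the cone constraint at the boundary point in direction `v`
  set e := ‖v‖⁻¹ • v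
  have he : ‖e‖ = 1 := norm_smul_inv_norm hv0
  set m := a + c • e
  have hm : 0 < ‖m‖ := by
    have := norm_sub_norm_le a (-(c • e))
    rw [sub_neg_eq_add, norm_neg, norm_smul, he, ha, Real.norm_of_nonneg hc0] at this
    linarith
  set w := ‖m‖⁻¹ • m
  have hw : ‖w‖ = 1 := norm_smul_inv_norm (norm_pos_iff.mp hm)
  have hwa : α ≤ ⟪w, a⟫ := by
    rw [real_inner_smul_left, inv_mul_eq_div, le_div_iff₀ hm]
    exact (mul_le_mul_of_nonneg_right hα hm.le).trans
      (sqrt_one_sub_sq_mul_norm_le_inner_add_smul ha he hc0 hc1.le)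
  obtain ⟨coef, hcoef, hnear, hsum⟩ := hspan w hw
  have hwv : ⟪w, v - d • a⟫ ≤ 0 := by
    refine inner_nonpos_of_eq_sum_smul hsum hcoef fun i hi => ?_
    have hia : cos (arccos α + arccos cA) ≤ ⟪l i, a⟫ := by
      rw [add_comm] at hangle ⊢
      exact cos_arccos_add_arccos_le_inner (hl i) hw ha (hnear i hi) hwa hangle
    rw [inner_sub_right, inner_smul_right]
    linarith [hv i hia]
  have hmv : ⟪m, v - d • a⟫ ≤ 0 := by
    have : m = ‖m‖ • w := by simp [w, smul_smul, mul_inv_cancel₀ hm.ne']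
    rw [this, inner_smul_left]
    exact mul_nonpos_of_nonneg_of_nonpos hm.le hwv
  have hev : ⟪e, v⟫ = ‖v‖ := by
    rw [real_inner_smul_left, real_inner_self_eq_norm_sq]
    field_simp [norm_ne_zero_iff.mpr hv0]
  have hea : ⟪e, a⟫ ≤ 1 := by simpa [he, ha] using real_inner_le_norm e a
  have hexpand : ⟪m, v - d • a⟫ = ⟪a, v⟫ + c * ‖v‖ - d * (1 + c * ⟪e, a⟫) := by
    simp only [m, inner_add_left, inner_sub_right, real_inner_smul_left, real_inner_smul_right,
      hev, real_inner_self_eq_norm_sq, ha, real_inner_comm a e]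
    ring
  linarith [mul_le_mul_of_nonneg_left hea (mul_nonneg hc0 hd)]

end

theorem add_arccos_lt_pi_div_two_of_cos_lt {θ x : ℝ} (hθ0 : 0 ≤ θ) (hθ : θ ≤ π / 2)
    (hx : cos (π / 2 - θ) < x) (hx1 : x ≤ 1) : θ + arccos x < π / 2 := by
  have := arccos_lt_arccos (neg_one_le_cos _) hx hx1
  rw [arccos_cos (by linarith) (by linarith [pi_pos])] at this
  linarith

theorem max_mul_add_max_mul_sub_eq_of_le {p τ d k : ℝ} (hk : 0 ≤ k) (hτ : τ ≤ p) :
    max p τ * d + max (k * (τ - p)) 0 = p * d := by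
  rw [max_eq_left hτ, max_eq_right (mul_nonpos_of_nonneg_of_nonpos hk (by linarith)), add_zero]

theorem stmt11_general (n_u n_c n_l : ℕ)
    (cbar kφ cA : ℝ) (hcbar1 : cbar < 1) (hkφ : 0 ≤ kφ)
    (hcA1 : cA < 1)
    (hcAbig : Real.cos (Real.pi / 2 - Real.arccos (Real.sqrt (1 - cbar ^ 2))) < cA)
    (a : Fin n_c → EuclideanSpace ℝ (Fin n_u)) (ha : ∀ j, ‖a j‖ = 1)
    (b c : Fin n_c → ℝ) (hc : ∀ j, 0 ≤ c j ∧ c j ≤ cbar)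
    (s : EuclideanSpace ℝ (Fin n_u))
    (hs : ∀ j, ⟪a j, s⟫ + c j * ‖s‖ ≤ b j)
    (l : Fin n_l → EuclideanSpace ℝ (Fin n_u)) (hl : ∀ i, ‖l i‖ = 1)
    (hbasis : ∀ l0 : EuclideanSpace ℝ (Fin n_u), ‖l0‖ = 1 →
      n_u ≤ {i : Fin n_l | cA ≤ ⟪l i, l0⟫}.ncard ∧
      ∃ coef : Fin n_l → ℝ, (∀ i, 0 ≤ coef i) ∧
        (∀ i, coef i ≠ 0 → cA ≤ ⟪l i, l0⟫) ∧ l0 = ∑ i, coef i • l i)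
    (cbarA : ℝ)
    (hcbarA : cbarA = Real.cos (Real.arccos (Real.sqrt (1 - cbar ^ 2)) + Real.arccos cA))
    (bL : Fin n_l → ℝ)
    (hbL : ∀ i, bL i = ⟪l i, s⟫ +
      ⨅ j : Fin n_c, (max ⟪l i, a j⟫ cbarA * ((b j - ⟪a j, s⟫ - c j * ‖s‖) / (1 + c j))
        + max (kφ * (cbarA - ⟪l i, a j⟫)) 0)) :
    (∀ i, ⟪l i, s⟫ ≤ bL i) ∧
    (∀ u : EuclideanSpace ℝ (Fin n_u),
      (∀ i, ⟪l i, u⟫ ≤ bL i) → ∀ j, ⟪a j, u⟫ + c j * ‖u‖ ≤ b j) := by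
  have hangle := add_arccos_lt_pi_div_two_of_cos_lt (arccos_nonneg _)
    (arccos_le_pi_div_two.mpr (sqrt_nonneg _)) hcAbig hcA1.le
  have hcbarA_pos : 0 < cbarA := hcbarA ▸ cos_pos_of_mem_Ioo
    ⟨by linarith [pi_pos, arccos_nonneg cA, arccos_nonneg √(1 - cbar ^ 2)], hangle⟩
  have hslack (j) : 0 ≤ (b j - ⟪a j, s⟫ - c j * ‖s‖) / (1 + c j) :=
    div_nonneg (by linarith [hs j]) (by linarith [(hc j).1])
  refine ⟨fun i => ?_, fun u hu j => ?_⟩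
  · rw [hbL i, le_add_iff_nonneg_right]
    exact Real.iInf_nonneg fun j => add_nonneg (mul_nonneg
      (hcbarA_pos.le.trans (le_max_right _ _)) (hslack j)) (le_max_right _ _)
  have hrow (i) (hi : cbarA ≤ ⟪l i, a j⟫) :
      ⟪l i, u - s⟫ ≤ ⟪l i, a j⟫ * ((b j - ⟪a j, s⟫ - c j * ‖s‖) / (1 + c j)) := by
    have hui := (hu i).trans_eq (hbL i) |>.trans
      (add_le_add_right (ciInf_le (Finite.bddBelow_range _) j) _)
    rw [max_mul_add_max_mul_sub_eq_of_le hkφ hi] at hui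
    rw [inner_sub_right]
    linarith
  have hcone := inner_add_mul_norm_le_of_positivelySpansNear (ha j) hl (hc j).1
    ((hc j).2.trans_lt hcbar1) (hslack j)
    (sqrt_le_sqrt (show 1 - cbar ^ 2 ≤ 1 - c j ^ 2 by nlinarith [hc j]))
    (fun w hw => (hbasis w hw).2) (by linarith [pi_pos]) fun i hi => hrow i (hcbarA ▸ hi)
  have hnorm : ‖u‖ ≤ ‖s‖ + ‖u - s‖ := norm_le_insert' u s
  rw [inner_sub_right, mul_div_cancel₀ _ (by linarith [(hc j).1])] at hcone
  linarith [mul_le_mul_of_nonneg_left hnorm (hc j).1]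

/-- Proposition 1 of the paper (the practical feasible-set reshaping formula
(42)–(43)), stated pointwise: with the rows `l i` of `A_L` forming a positive basis
adapted to the angle `arccos c_A`, and `b_L` defined by the explicit reshaping
formula around a feasible point `s` of the quadratically constrained set `U_c`, the
reshaped polyhedron `U_L` contains `s` and is contained in `U_c`. -/
theorem stmt11 (n_u n_c n_l : ℕ) (hnu : 1 ≤ n_u) (hnc : 1 ≤ n_c) (hnl : 1 ≤ n_l)
    (cbar kφ cA : ℝ) (hcbar0 : 0 ≤ cbar) (hcbar1 : cbar < 1) (hkφ : 0 ≤ kφ)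
    (hcA0 : 0 < cA) (hcA1 : cA < 1)
    (hcAbig : Real.cos (Real.pi / 2 - Real.arccos (Real.sqrt (1 - cbar ^ 2))) < cA)
    (a : Fin n_c → EuclideanSpace ℝ (Fin n_u)) (ha : ∀ j, ‖a j‖ = 1)
    (b c : Fin n_c → ℝ) (hc : ∀ j, 0 ≤ c j ∧ c j ≤ cbar)
    (s : EuclideanSpace ℝ (Fin n_u))
    (hs : ∀ j, ⟪a j, s⟫ + c j * ‖s‖ ≤ b j)
    (l : Fin n_l → EuclideanSpace ℝ (Fin n_u)) (hl : ∀ i, ‖l i‖ = 1)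
    (hbasis : ∀ l0 : EuclideanSpace ℝ (Fin n_u), ‖l0‖ = 1 →
      n_u ≤ {i : Fin n_l | cA ≤ ⟪l i, l0⟫}.ncard ∧
      ∃ coef : Fin n_l → ℝ, (∀ i, 0 ≤ coef i) ∧
        (∀ i, coef i ≠ 0 → cA ≤ ⟪l i, l0⟫) ∧ l0 = ∑ i, coef i • l i)
    (cbarA : ℝ)
    (hcbarA : cbarA = Real.cos (Real.arccos (Real.sqrt (1 - cbar ^ 2)) + Real.arccos cA))
    (bL : Fin n_l → ℝ)
    (hbL : ∀ i, bL i = ⟪l i, s⟫ +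
      ⨅ j : Fin n_c, (max ⟪l i, a j⟫ cbarA * ((b j - ⟪a j, s⟫ - c j * ‖s‖) / (1 + c j))
        + max (kφ * (cbarA - ⟪l i, a j⟫)) 0)) :
    (∀ i, ⟪l i, s⟫ ≤ bL i) ∧
    (∀ u : EuclideanSpace ℝ (Fin n_u),
      (∀ i, ⟪l i, u⟫ ≤ bL i) → ∀ j, ⟪a j, u⟫ + c j * ‖u‖ ≤ b j) :=
  stmt11_general n_u n_c n_l cbar kφ cA hcbar1 hkφ hcA1 hcAbig a ha b c hc s hs l hl hbasis cbarA
    hcbarA bL hbL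
end

section
/- Fix integers n_u ≥ 1, n_c ≥ 1, d ≥ 1 and a constant 0 ≤ c̄ < 1. Let X ⊆ ℝ^d, and let A_c : X → ℝ^{n_c×n_u}, b_c : X → ℝ^{n_c}, c_c : X → ℝ^{n_c} be Lipschitz functions on X such that for every x ∈ X each row of A_c(x) is a unit vector, 0 ≤ (c_c(x))_j ≤ c̄ for all j, and b_c is bounded on X. Suppose that for every x ∈ X and all j ≠ k: (b_c(x))_j/(1 + sgn((b_c(x))_j)·(c_c(x))_j) + (b_c(x))_k/(1 + sgn((b_c(x))_k)·(c_c(x))_k) ≥ 0. Then for every x ∈ X the problem of minimizing ‖u‖ over { u ∈ ℝ^{n_u} : ⟨(A_c(x))_{j,:}, u⟩ ≤ (b_c(x))_j/(1 − (c_c(x))_j) for all j = 1,…,n_c } has a unique solution ρ_s(x); the resulting map ρ_s : X → ℝ^{n_u} is Lipschitz on X; and for every x ∈ X, ρ_s(x) belongs to U_c(x) := { u ∈ ℝ^{n_u} : ⟨(A_c(x))_{j,:}, u⟩ + (c_c(x))_j·‖u‖ ≤ (b_c(x))_j for all j }. -/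
/-!
Write `β_j = b_j / (1 - c_j)`. If some `b_j < 0`, the sign condition forces every other `b_k`
to be so large that the single half-space `⟪a_j, u⟫ ≤ β_j` decides the problem: its
minimum-norm point `β_j • a_j` satisfies all other constraints, even the quadratic ones of
`U_c`. If no `b_j` is negative the answer is `0`. Either way `ρ_s = ∑ j, min β_j 0 • a_j`, a
finite sum of products of bounded Lipschitz functions of `x`, hence Lipschitz.
-/

open scoped RealInnerProductSpace NNReal

section BoundedLipschitz

variable {α E : Type*} [PseudoMetricSpace α] [SeminormedAddCommGroup E] {s : Set α}

def BoundedLipschitzOn (f : α → E) (s : Set α) : Prop :=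
  (∃ K, LipschitzOnWith K f s) ∧ ∃ M, ∀ x ∈ s, ‖f x‖ ≤ M

lemma BoundedLipschitzOn.add {f g : α → E} (hf : BoundedLipschitzOn f s)
    (hg : BoundedLipschitzOn g s) : BoundedLipschitzOn (f + g) s := by
  obtain ⟨⟨Kf, hKf⟩, Mf, hMf⟩ := hf
  obtain ⟨⟨Kg, hKg⟩, Mg, hMg⟩ := hg
  exact ⟨⟨Kf + Kg, hKf.add hKg⟩, Mf + Mg, fun x hx =>
    (norm_add_le _ _).trans (add_le_add (hMf x hx) (hMg x hx))⟩

lemma BoundedLipschitzOn.sum {ι : Type*} (t : Finset ι) {f : ι → α → E}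
    (hf : ∀ i ∈ t, BoundedLipschitzOn (f i) s) :
    BoundedLipschitzOn (fun x => ∑ i ∈ t, f i x) s := by
  rw [← Finset.sum_fn]
  refine Finset.sum_induction f (BoundedLipschitzOn · s) (fun _ _ => .add) ?_ hf
  exact ⟨⟨0, (LipschitzWith.const 0).lipschitzOnWith⟩, 0, fun x _ => by simp⟩

lemma BoundedLipschitzOn.smul {𝕜 : Type*} [NormedField 𝕜] [NormedSpace 𝕜 E] {f : α → 𝕜}
    {g : α → E} (hf : BoundedLipschitzOn f s) (hg : BoundedLipschitzOn g s) :
    BoundedLipschitzOn (fun x => f x • g x) s := by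
  obtain ⟨⟨Kf, hKf⟩, Mf, hMf⟩ := hf
  obtain ⟨⟨Kg, hKg⟩, Mg, hMg⟩ := hg
  refine ⟨⟨Mf.toNNReal * Kg + Kf * Mg.toNNReal, .of_dist_le_mul fun x hx y hy => ?_⟩,
    Mf * Mg, fun x hx => ?_⟩
  · have hMf' : ‖f x‖ ≤ Mf.toNNReal := (hMf x hx).trans (Real.le_coe_toNNReal Mf)
    have hMg' : ‖g y‖ ≤ Mg.toNNReal := (hMg y hy).trans (Real.le_coe_toNNReal Mg)
    have hsplit : f x • g x - f y • g y = f x • (g x - g y) + (f x - f y) • g y := by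
      rw [smul_sub, sub_smul]; abel
    calc dist (f x • g x) (f y • g y)
        ≤ ‖f x‖ * dist (g x) (g y) + dist (f x) (f y) * ‖g y‖ := by
          rw [dist_eq_norm, hsplit, dist_eq_norm, dist_eq_norm, ← norm_smul, ← norm_smul]
          exact norm_add_le _ _
      _ ≤ Mf.toNNReal * (Kg * dist x y) + Kf * dist x y * Mg.toNNReal := by
          gcongr
          exacts [hKg.dist_le_mul x hx y hy, hKf.dist_le_mul x hx y hy]
      _ = ↑(Mf.toNNReal * Kg + Kf * Mg.toNNReal) * dist x y := by push_cast; ring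
  · rw [norm_smul]
    exact mul_le_mul (hMf x hx) (hMg x hx) (norm_nonneg _) ((norm_nonneg _).trans (hMf x hx))

lemma BoundedLipschitzOn.min_const {f : α → ℝ} (hf : BoundedLipschitzOn f s) (r : ℝ) :
    BoundedLipschitzOn (fun x => min (f x) r) s := by
  obtain ⟨⟨K, hK⟩, M, hM⟩ := hf
  refine ⟨⟨1 * K, (LipschitzWith.id.min_const r).comp_lipschitzOnWith hK⟩, max M |r|,
    fun x hx => ?_⟩
  exact abs_min_le_max_abs_abs.trans (max_le_max (hM x hx) le_rfl)

lemma LipschitzOnWith.boundedLipschitzOn_inv {g : α → ℝ} {K : ℝ≥0} {γ : ℝ}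
    (hg : LipschitzOnWith K g s) (hγ : 0 < γ) (hgγ : ∀ x ∈ s, γ ≤ g x) :
    BoundedLipschitzOn (fun x => (g x)⁻¹) s := by
  refine ⟨⟨K / γ.toNNReal ^ 2, .of_dist_le_mul fun x hx y hy => ?_⟩, γ⁻¹, fun x hx => ?_⟩
  · have hx' := hγ.trans_le (hgγ x hx)
    have hy' := hγ.trans_le (hgγ y hy)
    have hden : γ ^ 2 ≤ g x * g y := by
      rw [sq]; exact mul_le_mul (hgγ x hx) (hgγ y hy) hγ.le hx'.le
    calc dist (g x)⁻¹ (g y)⁻¹ = dist (g x) (g y) / (g x * g y) := by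
          rw [Real.dist_eq, Real.dist_eq, inv_sub_inv hx'.ne' hy'.ne', abs_div, abs_sub_comm,
            abs_of_pos (mul_pos hx' hy')]
      _ ≤ K * dist x y / γ ^ 2 :=
          div_le_div₀ (by positivity) (hg.dist_le_mul x hx y hy) (by positivity) hden
      _ = ↑(K / γ.toNNReal ^ 2) * dist x y := by
          rw [NNReal.coe_div, NNReal.coe_pow, Real.coe_toNNReal _ hγ.le]; ring
  · rw [Real.norm_eq_abs, abs_inv, abs_of_pos (hγ.trans_le (hgγ x hx))]
    exact inv_anti₀ hγ (hgγ x hx)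

end BoundedLipschitz

section HalfSpace

variable {E : Type*} [NormedAddCommGroup E] [InnerProductSpace ℝ E] {a u : E}

lemma neg_le_norm_of_inner_le {t : ℝ} (ha : ‖a‖ ≤ 1) (h : ⟪a, u⟫ ≤ t) : -t ≤ ‖u‖ := by
  have := (abs_le.mp (abs_real_inner_le_norm a u)).1
  nlinarith [norm_nonneg u]

lemma eq_smul_of_inner_le_of_norm_le {t : ℝ} (ha : ‖a‖ = 1) (ht : t ≤ 0) (h : ⟪a, u⟫ ≤ t)
    (hu : ‖u‖ ≤ -t) : u = t • a := by
  have hsq : ‖u - t • a‖ ^ 2 ≤ 0 := by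
    rw [norm_sub_sq_real, norm_smul, real_inner_smul_right, real_inner_comm, ha,
      Real.norm_eq_abs, abs_of_nonpos ht]
    nlinarith [norm_nonneg u]
  rw [← sub_eq_zero, ← norm_eq_zero]
  exact pow_eq_zero_iff two_ne_zero |>.mp (le_antisymm hsq (sq_nonneg _))

lemma inner_le_div_of_inner_add_mul_norm_le {b c : ℝ} (ha : ‖a‖ ≤ 1) (hc0 : 0 ≤ c)
    (hc1 : c < 1) (h : ⟪a, u⟫ + c * ‖u‖ ≤ b) : ⟪a, u⟫ ≤ b / (1 - c) := by
  rw [le_div_iff₀ (sub_pos.mpr hc1)]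
  nlinarith [neg_le_norm_of_inner_le ha (le_refl ⟪a, u⟫)]

end HalfSpace

lemma neg_div_mul_le_of_sign_compat {bj cj bk ck : ℝ} (hcj : cj < 1) (hck0 : 0 ≤ ck)
    (hck1 : ck < 1) (hbj : bj < 0)
    (h : 0 ≤ bj / (1 + Real.sign bj * cj) + bk / (1 + Real.sign bk * ck)) :
    -(bj / (1 - cj)) * (1 + ck) ≤ bk := by
  have hβj : bj / (1 - cj) < 0 := div_neg_of_neg_of_pos hbj (by linarith)
  rw [Real.sign_of_neg hbj, neg_one_mul, ← sub_eq_add_neg] at h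
  rcases lt_trichotomy bk 0 with hbk | rfl | hbk
  · rw [Real.sign_of_neg hbk, neg_one_mul, ← sub_eq_add_neg] at h
    linarith [div_neg_of_neg_of_pos hbk (by linarith : 0 < 1 - ck)]
  · simp only [zero_div, add_zero] at h
    linarith
  · rw [Real.sign_of_pos hbk, one_mul] at h
    rw [← le_div_iff₀ (by linarith)]
    linarith

section MinNormSelection

variable {ι E : Type*} [Fintype ι] [NormedAddCommGroup E] [InnerProductSpace ℝ E]

/-- The paper's `ρ_s`. Under `SignCompatible` at most one `β j` is negative, so this is `0` or
`β j • a j`; the sum form avoids choosing that index, which may jump as the data vary. -/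
def minNormSelection (β : ι → ℝ) (a : ι → E) : E :=
  ∑ j, min (β j) 0 • a j

lemma minNormSelection_eq_zero {β : ι → ℝ} (a : ι → E) (h : ∀ j, 0 ≤ β j) :
    minNormSelection β a = 0 :=
  Finset.sum_eq_zero fun j _ => by rw [min_eq_right (h j), zero_smul]

lemma minNormSelection_eq_smul {β : ι → ℝ} (a : ι → E) {j : ι} (hj : β j ≤ 0)
    (hk : ∀ k ≠ j, 0 ≤ β k) : minNormSelection β a = β j • a j := by
  rw [minNormSelection, Finset.sum_eq_single j (fun k _ hkj => by
    rw [min_eq_right (hk k hkj), zero_smul]) (by simp), min_eq_left hj]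

/-- What the proof uses of the paper's sign condition (see `neg_div_mul_le_of_sign_compat`). -/
def SignCompatible (b c : ι → ℝ) : Prop :=
  ∀ j k, j ≠ k → b j < 0 → -(b j / (1 - c j)) * (1 + c k) ≤ b k

variable {a : ι → E} {b c : ι → ℝ}

local notation "ρ" => minNormSelection (fun j => b j / (1 - c j)) a

lemma SignCompatible.minNormSelection_eq (hcompat : SignCompatible b c)
    (hc0 : ∀ j, 0 ≤ c j) (hc1 : ∀ j, c j < 1) {j : ι} (hj : b j < 0) :
    ρ = (b j / (1 - c j)) • a j := by
  have hβj : b j / (1 - c j) < 0 := div_neg_of_neg_of_pos hj (sub_pos.mpr (hc1 j))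
  refine minNormSelection_eq_smul a hβj.le fun k hkj => div_nonneg ?_ (sub_pos.mpr (hc1 k)).le
  have := hcompat j k (Ne.symm hkj) hj
  nlinarith [hc0 k]

lemma minNormSelection_eq_zero_of_nonneg (hc1 : ∀ j, c j < 1) (hb : ∀ j, 0 ≤ b j) : ρ = 0 :=
  minNormSelection_eq_zero a fun j => div_nonneg (hb j) (sub_pos.mpr (hc1 j)).le

lemma SignCompatible.norm_minNormSelection_eq (hcompat : SignCompatible b c)
    (ha : ∀ j, ‖a j‖ = 1) (hc0 : ∀ j, 0 ≤ c j) (hc1 : ∀ j, c j < 1) {j : ι} (hj : b j < 0) :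
    ‖ρ‖ = -(b j / (1 - c j)) := by
  rw [hcompat.minNormSelection_eq hc0 hc1 hj, norm_smul, ha, mul_one, Real.norm_eq_abs,
    abs_of_neg (div_neg_of_neg_of_pos hj (sub_pos.mpr (hc1 j)))]

lemma SignCompatible.inner_add_mul_norm_le (hcompat : SignCompatible b c)
    (ha : ∀ j, ‖a j‖ = 1) (hc0 : ∀ j, 0 ≤ c j) (hc1 : ∀ j, c j < 1) (k : ι) :
    ⟪a k, ρ⟫ + c k * ‖ρ‖ ≤ b k := by
  by_cases hneg : ∃ j, b j < 0
  · obtain ⟨j, hj⟩ := hneg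
    have hnorm := hcompat.norm_minNormSelection_eq ha hc0 hc1 hj
    rcases eq_or_ne k j with rfl | hkj
    · rw [hnorm, hcompat.minNormSelection_eq hc0 hc1 hj, real_inner_smul_right,
        real_inner_self_eq_norm_sq, ha]
      apply le_of_eq
      field_simp [(sub_pos.mpr (hc1 k)).ne']
      ring
    · calc ⟪a k, ρ⟫ + c k * ‖ρ‖ ≤ ‖ρ‖ + c k * ‖ρ‖ := by
            gcongr; simpa [ha k] using real_inner_le_norm (a k) ρ
        _ = -(b j / (1 - c j)) * (1 + c k) := by rw [hnorm]; ring
        _ ≤ b k := hcompat j k (Ne.symm hkj) hj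
  · simp only [not_exists, not_lt] at hneg
    simpa [minNormSelection_eq_zero_of_nonneg hc1 hneg] using hneg k

lemma SignCompatible.inner_minNormSelection_le (hcompat : SignCompatible b c)
    (ha : ∀ j, ‖a j‖ = 1) (hc0 : ∀ j, 0 ≤ c j) (hc1 : ∀ j, c j < 1) (k : ι) :
    ⟪a k, ρ⟫ ≤ b k / (1 - c k) :=
  inner_le_div_of_inner_add_mul_norm_le (ha k).le (hc0 k) (hc1 k)
    (hcompat.inner_add_mul_norm_le ha hc0 hc1 k)

lemma SignCompatible.norm_minNormSelection_le (hcompat : SignCompatible b c)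
    (ha : ∀ j, ‖a j‖ = 1) (hc0 : ∀ j, 0 ≤ c j) (hc1 : ∀ j, c j < 1) {u : E}
    (hu : ∀ j, ⟪a j, u⟫ ≤ b j / (1 - c j)) : ‖ρ‖ ≤ ‖u‖ := by
  by_cases hneg : ∃ j, b j < 0
  · obtain ⟨j, hj⟩ := hneg
    rw [hcompat.norm_minNormSelection_eq ha hc0 hc1 hj]
    exact neg_le_norm_of_inner_le (ha j).le (hu j)
  · simp only [not_exists, not_lt] at hneg
    simp [minNormSelection_eq_zero_of_nonneg hc1 hneg]

lemma SignCompatible.eq_minNormSelection_of_norm_le (hcompat : SignCompatible b c)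
    (ha : ∀ j, ‖a j‖ = 1) (hc0 : ∀ j, 0 ≤ c j) (hc1 : ∀ j, c j < 1) {u : E}
    (hu : ∀ j, ⟪a j, u⟫ ≤ b j / (1 - c j)) (h : ‖u‖ ≤ ‖ρ‖) : u = ρ := by
  by_cases hneg : ∃ j, b j < 0
  · obtain ⟨j, hj⟩ := hneg
    rw [hcompat.norm_minNormSelection_eq ha hc0 hc1 hj] at h
    rw [hcompat.minNormSelection_eq hc0 hc1 hj]
    exact eq_smul_of_inner_le_of_norm_le (ha j)
      (div_neg_of_neg_of_pos hj (sub_pos.mpr (hc1 j))).le (hu j) h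
  · simp only [not_exists, not_lt] at hneg
    simpa [minNormSelection_eq_zero_of_nonneg hc1 hneg] using h

end MinNormSelection

lemma boundedLipschitzOn_minNormSelection {α ι E : Type*} [PseudoMetricSpace α] [Fintype ι]
    [NormedAddCommGroup E] [InnerProductSpace ℝ E] {s : Set α} {a : α → ι → E}
    {b c : α → ι → ℝ} {cbar : ℝ} (hcbar : cbar < 1)
    (ha : ∀ j, BoundedLipschitzOn (a · j) s) (hb : ∀ j, BoundedLipschitzOn (b · j) s)
    (hc : ∀ j, ∃ K, LipschitzOnWith K (c · j) s) (hc_le : ∀ x ∈ s, ∀ j, c x j ≤ cbar) :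
    BoundedLipschitzOn (fun x => minNormSelection (fun j => b x j / (1 - c x j)) (a x)) s := by
  refine BoundedLipschitzOn.sum Finset.univ fun j _ => ?_
  obtain ⟨K, hK⟩ := hc j
  have hinv : BoundedLipschitzOn (fun x => (1 - c x j)⁻¹) s :=
    ((LipschitzWith.const 1).lipschitzOnWith.sub hK).boundedLipschitzOn_inv (sub_pos.mpr hcbar)
      fun x hx => sub_le_sub_left (hc_le x hx j) 1
  exact (((hb j).smul hinv).min_const 0).smul (ha j)

theorem stmt12_general (n_u n_c d : ℕ)
    (cbar : ℝ) (hcbar1 : cbar < 1)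
    (X : Set (EuclideanSpace ℝ (Fin d)))
    (a : EuclideanSpace ℝ (Fin d) → Fin n_c → EuclideanSpace ℝ (Fin n_u))
    (b c : EuclideanSpace ℝ (Fin d) → Fin n_c → ℝ)
    (Ka Kb Kc : NNReal)
    (ha_lip : ∀ j, LipschitzOnWith Ka (fun x => a x j) X)
    (hb_lip : ∀ j, LipschitzOnWith Kb (fun x => b x j) X)
    (hc_lip : ∀ j, LipschitzOnWith Kc (fun x => c x j) X)
    (hunit : ∀ x ∈ X, ∀ j, ‖a x j‖ = 1)
    (hcrange : ∀ x ∈ X, ∀ j, 0 ≤ c x j ∧ c x j ≤ cbar)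
    (hbbd : ∃ M : ℝ, ∀ x ∈ X, ∀ j, |b x j| ≤ M)
    (hcompat : ∀ x ∈ X, ∀ j k, j ≠ k →
      0 ≤ b x j / (1 + Real.sign (b x j) * c x j)
        + b x k / (1 + Real.sign (b x k) * c x k)) :
    ∃ ρs : EuclideanSpace ℝ (Fin d) → EuclideanSpace ℝ (Fin n_u),
      (∀ x ∈ X,
        (∀ j, ⟪a x j, ρs x⟫ ≤ b x j / (1 - c x j)) ∧
        (∀ u : EuclideanSpace ℝ (Fin n_u),
          (∀ j, ⟪a x j, u⟫ ≤ b x j / (1 - c x j)) → ‖ρs x‖ ≤ ‖u‖) ∧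
        (∀ u : EuclideanSpace ℝ (Fin n_u),
          (∀ j, ⟪a x j, u⟫ ≤ b x j / (1 - c x j)) → ‖u‖ = ‖ρs x‖ → u = ρs x) ∧
        (∀ j, ⟪a x j, ρs x⟫ + c x j * ‖ρs x‖ ≤ b x j)) ∧
      ∃ K : NNReal, LipschitzOnWith K ρs X := by
  refine ⟨fun x => minNormSelection (fun j => b x j / (1 - c x j)) (a x), fun x hx => ?_, ?_⟩
  · have hc0 : ∀ j, 0 ≤ c x j := fun j => (hcrange x hx j).1
    have hc1 : ∀ j, c x j < 1 := fun j => (hcrange x hx j).2.trans_lt hcbar1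
    have hsign : SignCompatible (b x) (c x) := fun j k hjk hbj =>
      neg_div_mul_le_of_sign_compat (hc1 j) (hc0 k) (hc1 k) hbj (hcompat x hx j k hjk)
    exact ⟨hsign.inner_minNormSelection_le (hunit x hx) hc0 hc1,
      fun u hu => hsign.norm_minNormSelection_le (hunit x hx) hc0 hc1 hu,
      fun u hu h => hsign.eq_minNormSelection_of_norm_le (hunit x hx) hc0 hc1 hu h.le,
      hsign.inner_add_mul_norm_le (hunit x hx) hc0 hc1⟩
  · obtain ⟨M, hM⟩ := hbbd
    exact (boundedLipschitzOn_minNormSelection hcbar1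
      (fun j => ⟨⟨Ka, ha_lip j⟩, 1, fun x hx => (hunit x hx j).le⟩)
      (fun j => ⟨⟨Kb, hb_lip j⟩, M, fun x hx => hM x hx j⟩)
      (fun j => ⟨Kc, hc_lip j⟩) fun x hx j => (hcrange x hx j).2).1

/-- Lemma 5 of the paper (Appendix F): under the compatibility condition (55), the
minimum-norm selection of the linear relaxation of the quadratically constrained
feasible set `U_c(x)` exists, is unique, is Lipschitz on `X` (the data `A_c`, `b_c`,
`c_c` being Lipschitz, the rows of `A_c(x)` unit vectors, `0 ≤ c_c ≤ c̄ < 1`, and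
`b_c` bounded), and belongs to `U_c(x)`. -/
theorem stmt12 (n_u n_c d : ℕ) (hnu : 1 ≤ n_u) (hnc : 1 ≤ n_c) (hd : 1 ≤ d)
    (cbar : ℝ) (hcbar0 : 0 ≤ cbar) (hcbar1 : cbar < 1)
    (X : Set (EuclideanSpace ℝ (Fin d)))
    (a : EuclideanSpace ℝ (Fin d) → Fin n_c → EuclideanSpace ℝ (Fin n_u))
    (b c : EuclideanSpace ℝ (Fin d) → Fin n_c → ℝ)
    (Ka Kb Kc : NNReal)
    (ha_lip : ∀ j, LipschitzOnWith Ka (fun x => a x j) X)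
    (hb_lip : ∀ j, LipschitzOnWith Kb (fun x => b x j) X)
    (hc_lip : ∀ j, LipschitzOnWith Kc (fun x => c x j) X)
    (hunit : ∀ x ∈ X, ∀ j, ‖a x j‖ = 1)
    (hcrange : ∀ x ∈ X, ∀ j, 0 ≤ c x j ∧ c x j ≤ cbar)
    (hbbd : ∃ M : ℝ, ∀ x ∈ X, ∀ j, |b x j| ≤ M)
    (hcompat : ∀ x ∈ X, ∀ j k, j ≠ k →
      0 ≤ b x j / (1 + Real.sign (b x j) * c x j)
        + b x k / (1 + Real.sign (b x k) * c x k)) :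
    ∃ ρs : EuclideanSpace ℝ (Fin d) → EuclideanSpace ℝ (Fin n_u),
      (∀ x ∈ X,
        (∀ j, ⟪a x j, ρs x⟫ ≤ b x j / (1 - c x j)) ∧
        (∀ u : EuclideanSpace ℝ (Fin n_u),
          (∀ j, ⟪a x j, u⟫ ≤ b x j / (1 - c x j)) → ‖ρs x‖ ≤ ‖u‖) ∧
        (∀ u : EuclideanSpace ℝ (Fin n_u),
          (∀ j, ⟪a x j, u⟫ ≤ b x j / (1 - c x j)) → ‖u‖ = ‖ρs x‖ → u = ρs x) ∧
        (∀ j, ⟪a x j, ρs x⟫ + c x j * ‖ρs x‖ ≤ b x j)) ∧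
      ∃ K : NNReal, LipschitzOnWith K ρs X :=
  stmt12_general n_u n_c d cbar hcbar1 X a b c Ka Kb Kc ha_lip hb_lip hc_lip hunit hcrange hbbd
    hcompat
end

section
/- Fix an integer m ≥ 1, a unit vector a ∈ ℝ^m, a constant c with 0 ≤ c < 1, and b ∈ ℝ. Then the set S = { u ∈ ℝ^m : ⟨a, u⟩ + c·‖u‖ ≤ b } is nonempty and closed, and it has a unique element of minimum Euclidean norm, namely u* = 0 if b ≥ 0 and u* = (b/(1−c))·a if b < 0. -/
open scoped RealInnerProductSpace

/-!
By Cauchy–Schwarz `⟪a, u⟫ ≥ -‖u‖` for a unit vector `a`, so every `u ∈ S` satisfies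
`b ≥ -(1 - c) ‖u‖`, i.e. `‖u‖ ≥ -b / (1 - c)`. For `b < 0` this bound is attained by
`(b / (1 - c)) • a`, and equality forces equality in Cauchy–Schwarz, so `u` is a nonpositive
multiple of `a` of the prescribed length.
-/

section

variable {E : Type*} [NormedAddCommGroup E]

def IsUniqueMinNorm (S : Set E) (x : E) : Prop :=
  x ∈ S ∧ (∀ u ∈ S, ‖x‖ ≤ ‖u‖) ∧ ∀ u ∈ S, ‖u‖ = ‖x‖ → u = x

lemma isUniqueMinNorm_zero {S : Set E} (h : (0 : E) ∈ S) : IsUniqueMinNorm S 0 :=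
  ⟨h, fun u _ => by simp, fun u _ hu => norm_eq_zero.mp (by simpa using hu)⟩

variable [InnerProductSpace ℝ E] {a u : E} {b c : ℝ}

lemma isClosed_setOf_inner_add_mul_norm_le (a : E) (c b : ℝ) :
    IsClosed {u : E | ⟪a, u⟫ + c * ‖u‖ ≤ b} :=
  isClosed_le (by fun_prop) continuous_const

lemma neg_norm_le_inner_of_norm_eq_one (ha : ‖a‖ = 1) (u : E) : -‖u‖ ≤ ⟪a, u⟫ := by
  have := abs_real_inner_le_norm a u
  rw [ha, one_mul] at this
  linarith [neg_abs_le ⟪a, u⟫]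

lemma neg_le_mul_norm_of_inner_add_mul_norm_le (ha : ‖a‖ = 1)
    (hu : ⟪a, u⟫ + c * ‖u‖ ≤ b) : -b ≤ (1 - c) * ‖u‖ := by
  linarith [neg_norm_le_inner_of_norm_eq_one ha u]

lemma eq_neg_norm_smul_of_inner_eq_neg_norm (ha : ‖a‖ = 1) (h : ⟪a, u⟫ = -‖u‖) :
    u = -‖u‖ • a := by
  have hneg : ⟪a, -u⟫ = ‖a‖ * ‖-u‖ := by rw [inner_neg_right, h, ha, norm_neg]; ring
  rw [inner_eq_norm_mul_iff_real, norm_neg, ha, one_smul] at hneg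
  rw [neg_smul, hneg, neg_neg]

lemma inner_add_mul_norm_smul_of_nonpos (ha : ‖a‖ = 1) {t : ℝ} (ht : t ≤ 0) :
    ⟪a, t • a⟫ + c * ‖t • a‖ = (1 - c) * t := by
  rw [real_inner_smul_right, real_inner_self_eq_norm_sq, norm_smul, ha, Real.norm_eq_abs,
    abs_of_nonpos ht]
  ring

lemma isUniqueMinNorm_div_smul_of_neg (ha : ‖a‖ = 1) (hc : c < 1) (hb : b < 0) :
    IsUniqueMinNorm {u : E | ⟪a, u⟫ + c * ‖u‖ ≤ b} ((b / (1 - c)) • a) := by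
  have hc' : 0 < 1 - c := sub_pos.mpr hc
  have ht : b / (1 - c) ≤ 0 := (div_neg_of_neg_of_pos hb hc').le
  have hnorm : ‖(b / (1 - c)) • a‖ = -(b / (1 - c)) := by
    rw [norm_smul, ha, mul_one, Real.norm_eq_abs, abs_of_nonpos ht]
  have hcancel : (1 - c) * (b / (1 - c)) = b := mul_div_cancel₀ b hc'.ne'
  refine ⟨?_, fun u (hu : _ ≤ b) => ?_, fun u (hu : _ ≤ b) hun => ?_⟩
  · show _ ≤ b
    rw [inner_add_mul_norm_smul_of_nonpos ha ht, hcancel]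
  · rw [hnorm, neg_le, ← mul_le_mul_iff_of_pos_left hc', hcancel]
    linarith [neg_le_mul_norm_of_inner_add_mul_norm_le ha hu]
  · rw [hnorm] at hun
    have hinner : ⟪a, u⟫ = -‖u‖ := by
      refine le_antisymm ?_ (neg_norm_le_inner_of_norm_eq_one ha u)
      rw [hun] at hu ⊢
      linarith
    rw [eq_neg_norm_smul_of_inner_eq_neg_norm ha hinner, hun, neg_neg]

end

theorem stmt13_general (m : ℕ)
    (a : EuclideanSpace ℝ (Fin m)) (ha : ‖a‖ = 1)
    (c b : ℝ) (hc1 : c < 1) :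
    let S : Set (EuclideanSpace ℝ (Fin m)) := {u | ⟪a, u⟫ + c * ‖u‖ ≤ b}
    let ustar : EuclideanSpace ℝ (Fin m) :=
      if 0 ≤ b then 0 else (b / (1 - c)) • a
    S.Nonempty ∧ IsClosed S ∧ ustar ∈ S ∧ (∀ u ∈ S, ‖ustar‖ ≤ ‖u‖) ∧
      ∀ u ∈ S, ‖u‖ = ‖ustar‖ → u = ustar := by
  intro S ustar
  have hmin : IsUniqueMinNorm S ustar := by
    by_cases hb : 0 ≤ b
    · simpa only [ustar, if_pos hb] using isUniqueMinNorm_zero (by simpa [S] using hb)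
    · simpa only [ustar, if_neg hb] using isUniqueMinNorm_div_smul_of_neg ha hc1 (not_le.mp hb)
  obtain ⟨hmem, hle, huniq⟩ := hmin
  exact ⟨⟨ustar, hmem⟩, isClosed_setOf_inner_add_mul_norm_le a c b, hmem, hle, huniq⟩

/-- The explicit minimum-norm solution of a single quadratically constrained problem
underlying the closed-form reference-tracking control law (49)–(50) of the paper:
the set `S = {u | ⟪a, u⟫ + c‖u‖ ≤ b}` (with `a` a unit vector, `0 ≤ c < 1`) is
nonempty and closed, and its unique element of minimum norm is `0` if `b ≥ 0` and
`(b/(1−c)) • a` if `b < 0`. -/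
theorem stmt13 (m : ℕ) (hm : 1 ≤ m)
    (a : EuclideanSpace ℝ (Fin m)) (ha : ‖a‖ = 1)
    (c b : ℝ) (hc0 : 0 ≤ c) (hc1 : c < 1) :
    let S : Set (EuclideanSpace ℝ (Fin m)) := {u | ⟪a, u⟫ + c * ‖u‖ ≤ b}
    let ustar : EuclideanSpace ℝ (Fin m) :=
      if 0 ≤ b then 0 else (b / (1 - c)) • a
    S.Nonempty ∧ IsClosed S ∧ ustar ∈ S ∧ (∀ u ∈ S, ‖ustar‖ ≤ ‖u‖) ∧
      ∀ u ∈ S, ‖u‖ = ‖ustar‖ → u = ustar :=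
  stmt13_general m a ha c b hc1
end

section
/- Fix integers m ≥ 1 and n_c ≥ 1. Let a_1,…,a_{n_c} ∈ ℝ^m be unit vectors, and let b, c ∈ ℝ^{n_c} with 0 ≤ c_j < 1 for all j. Assume that for all j ≠ k: b_j/(1 + sgn(b_j)·c_j) + b_k/(1 + sgn(b_k)·c_k) ≥ 0. Then: (1) at most one index j has b_j < 0; (2) the polyhedron P = { u ∈ ℝ^m : ⟨a_j, u⟩ ≤ b_j/(1 − c_j) for all j } is nonempty and its unique element of minimum Euclidean norm is u* = 0 if min_j b_j ≥ 0, and u* = (b_k/(1 − c_k))·a_k if b_k < 0 for the (unique) index k with b_k < 0; (3) this u* satisfies ⟨a_j, u*⟩ + c_j·‖u*‖ ≤ b_j for all j = 1,…,n_c. -/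
open scoped RealInnerProductSpace

/-- The pointwise core of the proof of Lemma 5 of the paper (equations (80)–(83)):
under the compatibility condition (55), (1) at most one right-hand side `b j` is
negative; (2) the linear relaxation `P = {u | ⟪a j, u⟫ ≤ b j/(1−c j)}` is nonempty
with explicit unique minimum-norm element (`0` if all `b j ≥ 0`, else
`(b k/(1−c k)) • a k` for the unique negative index `k`); and (3) this minimum-norm
element satisfies all the original quadratic constraints. -/
theorem stmt14 (m n_c : ℕ) (hm : 1 ≤ m) (hnc : 1 ≤ n_c)
    (a : Fin n_c → EuclideanSpace ℝ (Fin m)) (ha : ∀ j, ‖a j‖ = 1)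
    (b c : Fin n_c → ℝ) (hc : ∀ j, 0 ≤ c j ∧ c j < 1)
    (hcompat : ∀ j k, j ≠ k →
      0 ≤ b j / (1 + Real.sign (b j) * c j) + b k / (1 + Real.sign (b k) * c k)) :
    (∀ j k, b j < 0 → b k < 0 → j = k) ∧
    ((∀ j, 0 ≤ b j) →
      ((∀ j, ⟪a j, (0 : EuclideanSpace ℝ (Fin m))⟫ ≤ b j / (1 - c j)) ∧
        (∀ u : EuclideanSpace ℝ (Fin m),
          (∀ j, ⟪a j, u⟫ ≤ b j / (1 - c j)) →
            ‖(0 : EuclideanSpace ℝ (Fin m))‖ ≤ ‖u‖) ∧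
        (∀ u : EuclideanSpace ℝ (Fin m),
          (∀ j, ⟪a j, u⟫ ≤ b j / (1 - c j)) →
            ‖u‖ = ‖(0 : EuclideanSpace ℝ (Fin m))‖ →
            u = (0 : EuclideanSpace ℝ (Fin m))) ∧
        (∀ j, ⟪a j, (0 : EuclideanSpace ℝ (Fin m))⟫
          + c j * ‖(0 : EuclideanSpace ℝ (Fin m))‖ ≤ b j))) ∧
    (∀ k, b k < 0 →
      ((∀ j, ⟪a j, (b k / (1 - c k)) • a k⟫ ≤ b j / (1 - c j)) ∧
        (∀ u : EuclideanSpace ℝ (Fin m),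
          (∀ j, ⟪a j, u⟫ ≤ b j / (1 - c j)) →
            ‖(b k / (1 - c k)) • a k‖ ≤ ‖u‖) ∧
        (∀ u : EuclideanSpace ℝ (Fin m),
          (∀ j, ⟪a j, u⟫ ≤ b j / (1 - c j)) →
            ‖u‖ = ‖(b k / (1 - c k)) • a k‖ → u = (b k / (1 - c k)) • a k) ∧
        (∀ j, ⟪a j, (b k / (1 - c k)) • a k⟫
          + c j * ‖(b k / (1 - c k)) • a k‖ ≤ b j))) := by
  have hc1 : ∀ j, (0:ℝ) < 1 - c j := fun j => by linarith [(hc j).2]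
  have hc2 : ∀ j, (0:ℝ) < 1 + c j := fun j => by linarith [(hc j).1]
  -- (1) at most one negative index
  have huniq : ∀ j k, b j < 0 → b k < 0 → j = k := by
    intro j k hj hk
    by_contra hne
    have h := hcompat j k hne
    rw [Real.sign_of_neg hj, Real.sign_of_neg hk] at h
    have h1 : b j / (1 + (-1) * c j) < 0 := by
      rw [show (1 + (-1) * c j) = 1 - c j by ring]
      exact div_neg_of_neg_of_pos hj (hc1 j)
    have h2 : b k / (1 + (-1) * c k) < 0 := by
      rw [show (1 + (-1) * c k) = 1 - c k by ring]
      exact div_neg_of_neg_of_pos hk (hc1 k)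
    linarith
  refine ⟨huniq, ?_, ?_⟩
  · intro hb
    refine ⟨?_, ?_, ?_, ?_⟩
    · intro j
      simp only [inner_zero_right]
      exact div_nonneg (hb j) (hc1 j).le
    · intro u _; simp
    · intro u _ hu; simpa using hu
    · intro j; simp [hb j]
  · intro k hk
    set t : ℝ := b k / (1 - c k) with ht
    have htneg : t < 0 := div_neg_of_neg_of_pos hk (hc1 k)
    have hnorm : ‖t • a k‖ = -t := by
      rw [norm_smul, ha k, Real.norm_eq_abs, abs_of_neg htneg, mul_one]
    -- every other b j is positive
    have hpos : ∀ j, j ≠ k → 0 < b j := by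
      intro j hjk
      rcases lt_trichotomy (b j) 0 with h | h | h
      · exact absurd (huniq j k h hk) hjk
      · exfalso
        have hco := hcompat j k hjk
        rw [h, Real.sign_zero, Real.sign_of_neg hk] at hco
        have hlt : b k / (1 + (-1) * c k) < 0 := by
          rw [show (1 + (-1) * c k) = 1 - c k by ring]
          exact div_neg_of_neg_of_pos hk (hc1 k)
        simp only [zero_div, zero_add] at hco
        rw [show (1 + (-1) * c k) = 1 - c k by ring] at hco
        have hlt2 : b k / (1 - c k) < 0 := div_neg_of_neg_of_pos hk (hc1 k)
        linarith
      · exact h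
    -- key bound for j ≠ k
    have hbound : ∀ j, j ≠ k → -t ≤ b j / (1 + c j) := by
      intro j hjk
      have hco := hcompat j k hjk
      rw [Real.sign_of_pos (hpos j hjk), Real.sign_of_neg hk] at hco
      rw [show (1 + 1 * c j) = 1 + c j by ring,
        show (1 + (-1) * c k) = 1 - c k by ring] at hco
      linarith
    -- inner product bounds
    have hinner : ∀ j, ⟪a j, t • a k⟫ ≤ -t := by
      intro j
      rw [real_inner_smul_right]
      have hcs : |⟪a j, a k⟫| ≤ 1 := by
        have := abs_real_inner_le_norm (a j) (a k)
        rwa [ha j, ha k, one_mul] at this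
      have hge : -1 ≤ ⟪a j, a k⟫ := by
        have := neg_abs_le (⟪a j, a k⟫); linarith
      nlinarith
    have hinnerk : ⟪a k, t • a k⟫ = t := by
      rw [real_inner_smul_right, real_inner_self_eq_norm_sq, ha k]
      ring
    have hfeas : ∀ j, ⟪a j, t • a k⟫ ≤ b j / (1 - c j) := by
      intro j
      rcases eq_or_ne j k with rfl | hjk
      · rw [hinnerk]
      · refine le_trans (hinner j) (le_trans (hbound j hjk) ?_)
        have hbj := (hpos j hjk).le
        rw [div_le_div_iff₀ (hc2 j) (hc1 j)]
        nlinarith [(hc j).1]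
    have hmin : ∀ u : EuclideanSpace ℝ (Fin m),
        (∀ j, ⟪a j, u⟫ ≤ b j / (1 - c j)) → ‖t • a k‖ ≤ ‖u‖ := by
      intro u hu
      have h1 : ⟪a k, u⟫ ≤ t := hu k
      have h2 : |⟪a k, u⟫| ≤ ‖u‖ := by
        have := abs_real_inner_le_norm (a k) u
        rwa [ha k, one_mul] at this
      rw [hnorm]
      have := neg_abs_le (⟪a k, u⟫)
      linarith
    refine ⟨hfeas, hmin, ?_, ?_⟩
    · intro u hu hnu
      have h1 : ⟪a k, u⟫ ≤ t := hu k
      have h2 : |⟪a k, u⟫| ≤ ‖u‖ := by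
        have := abs_real_inner_le_norm (a k) u
        rwa [ha k, one_mul] at this
      rw [hnorm] at hnu
      have heq : ⟪a k, u⟫ = t := by
        have := neg_abs_le (⟪a k, u⟫); linarith
      have heq2 : ⟪a k, -u⟫ = ‖a k‖ * ‖-u‖ := by
        rw [inner_neg_right, heq, ha k, one_mul, norm_neg, hnu]
      have h3 := inner_eq_norm_mul_iff_real.mp heq2
      rw [norm_neg, hnu, ha k, one_smul] at h3
      rw [neg_smul] at h3
      exact (neg_injective h3).symm
    · intro j
      rcases eq_or_ne j k with rfl | hjk
      · rw [hinnerk, hnorm]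
        have h : t * (1 - c j) = b j := div_mul_cancel₀ _ (hc1 j).ne'
        have h' : t + c j * -t = b j := by rw [← h]; ring
        linarith
      · have h1 := hinner j
        have h2 := hbound j hjk
        rw [hnorm]
        have h3 : (-t) * (1 + c j) ≤ b j := by
          have h4 := mul_le_mul_of_nonneg_right h2 (hc2 j).le
          rwa [div_mul_cancel₀ _ (hc2 j).ne'] at h4
        nlinarith [(hc j).1]
end

section
/- Fix integers n, m ≥ 1 and constants 0 ≤ δ̄ < ḡ. Let g be a real n×m matrix with λ_min(g·gᵀ) ≥ ḡ², and let δ be a real n×m matrix with induced 2-norm ‖δ‖ ≤ δ̄. Let x̃ ∈ ℝ^n with x̃ ≠ 0, let κ ≥ 0 be a real number, set u = −(gᵀx̃/‖gᵀx̃‖)·(ḡ/(ḡ−δ̄))·κ, and let F ∈ ℝ^n, w ∈ ℝ^m. Then ⟨x̃/‖x̃‖, F + (g+δ)(u+w)⟩ ≤ (‖gᵀx̃‖/‖x̃‖)·( −κ + ((ḡ+δ̄)/ḡ)·‖w‖ + ‖F‖/ḡ ). -/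
/-!
Write `A = gᵀ x̃`. The control contributes `⟪A, u⟫ = -(ḡ / (ḡ - δ̄)) κ ‖A‖`, while the
perturbation adds at most `δ̄ ‖x̃‖ ‖u‖ ≤ (δ̄ / ḡ) ‖A‖ ‖u‖`, since `ḡ ‖x̃‖ ≤ ‖A‖`; the gain
`ḡ / (ḡ - δ̄)` is exactly what leaves the net rate `-κ ‖A‖`. The terms in `w` and `F` are
bounded by Cauchy–Schwarz in the same way.
-/

open scoped RealInnerProductSpace InnerProduct

section

variable {E F : Type*} [NormedAddCommGroup E] [InnerProductSpace ℝ E]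
  [NormedAddCommGroup F] [InnerProductSpace ℝ F]

theorem real_inner_smul_inv_norm_smul_self (a : E) (c : ℝ) :
    ⟪a, c • (‖a‖⁻¹ • a)⟫ = c * ‖a‖ := by
  rcases eq_or_ne a 0 with rfl | ha
  · simp
  rw [real_inner_smul_right, real_inner_smul_right, real_inner_self_eq_norm_sq]
  field_simp [norm_ne_zero_iff.mpr ha]

theorem norm_smul_inv_norm_smul_le {c : ℝ} (hc : 0 ≤ c) (a : E) :
    ‖c • (‖a‖⁻¹ • a)‖ ≤ c := by
  rcases eq_or_ne a 0 with rfl | ha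
  · simpa using hc
  rw [norm_smul, norm_smul, norm_inv, norm_norm, inv_mul_cancel₀ (norm_ne_zero_iff.2 ha),
    Real.norm_of_nonneg hc, mul_one]

variable [CompleteSpace E] [CompleteSpace F]

theorem real_inner_add_apply_le_inner_adjoint_add {g δ : E →L[ℝ] F} {δbar : ℝ}
    (hδ : ‖δ‖ ≤ δbar) (x : F) (v : E) :
    ⟪x, (g + δ) v⟫ ≤ ⟪(g†) x, v⟫ + δbar * ‖x‖ * ‖v‖ := by
  rw [add_apply, inner_add_right, ContinuousLinearMap.adjoint_inner_left]
  gcongr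
  calc ⟪x, δ v⟫ ≤ ‖x‖ * ‖δ v‖ := real_inner_le_norm _ _
    _ ≤ ‖x‖ * (δbar * ‖v‖) := by gcongr; exact δ.le_of_opNorm_le hδ v
    _ = δbar * ‖x‖ * ‖v‖ := by ring

theorem real_inner_add_apply_tracking_control_le {g δ : E →L[ℝ] F} {gbar δbar κ : ℝ}
    (hδg : δbar < gbar) (hδ : ‖δ‖ ≤ δbar) (hκ : 0 ≤ κ) {x : F}
    (hgx : gbar * ‖x‖ ≤ ‖(g†) x‖) (f : F) (w : E) :
    ⟪x, f + (g + δ) (-(gbar / (gbar - δbar) * κ) • (‖(g†) x‖⁻¹ • (g†) x) + w)⟫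
      ≤ ‖(g†) x‖ * (-κ + (gbar + δbar) / gbar * ‖w‖ + ‖f‖ / gbar) := by
  set A := (g†) x
  set c := gbar / (gbar - δbar) * κ
  have hδ0 : 0 ≤ δbar := (norm_nonneg δ).trans hδ
  have hg0 : 0 < gbar := hδ0.trans_lt hδg
  have hc : 0 ≤ c := by have := sub_pos.2 hδg; positivity
  have hxA : ‖x‖ ≤ ‖A‖ / gbar := by rwa [le_div_iff₀ hg0, mul_comm]
  have hf : ⟪x, f⟫ ≤ ‖A‖ / gbar * ‖f‖ :=
    (real_inner_le_norm x f).trans (by gcongr)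
  have hcontrol : ⟪x, (g + δ) (-c • (‖A‖⁻¹ • A))⟫ ≤ -c * ‖A‖ + δbar * (‖A‖ / gbar) * c := by
    refine (real_inner_add_apply_le_inner_adjoint_add hδ x _).trans ?_
    rw [real_inner_smul_inv_norm_smul_self, neg_smul, norm_neg]
    gcongr
    exact norm_smul_inv_norm_smul_le hc A
  have hw : ⟪x, (g + δ) w⟫ ≤ ‖A‖ * ‖w‖ + δbar * (‖A‖ / gbar) * ‖w‖ :=
    (real_inner_add_apply_le_inner_adjoint_add hδ x w).trans
      (by gcongr; exact real_inner_le_norm A w)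
  have hrate : -c * ‖A‖ + δbar * (‖A‖ / gbar) * c = -κ * ‖A‖ := by
    simp only [c]
    field_simp [(sub_pos.2 hδg).ne']
    ring
  rw [map_add, inner_add_right, inner_add_right]
  calc _ ≤ ‖A‖ / gbar * ‖f‖ + (-κ * ‖A‖) + (‖A‖ * ‖w‖ + δbar * (‖A‖ / gbar) * ‖w‖) := by
        linarith
    _ = _ := by field_simp; ring

end

theorem stmt15_general (n m : ℕ)
    (gbar δbar : ℝ) (hδg : δbar < gbar)
    (g δ : EuclideanSpace ℝ (Fin m) →L[ℝ] EuclideanSpace ℝ (Fin n))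
    (hgmin : ∀ p : EuclideanSpace ℝ (Fin n),
      gbar * ‖p‖ ≤ ‖ContinuousLinearMap.adjoint g p‖)
    (hδnorm : ‖δ‖ ≤ δbar)
    (xt : EuclideanSpace ℝ (Fin n))
    (κ : ℝ) (hκ : 0 ≤ κ)
    (u : EuclideanSpace ℝ (Fin m))
    (hu : u = -((gbar / (gbar - δbar)) * κ) •
      ((‖ContinuousLinearMap.adjoint g xt‖)⁻¹ • ContinuousLinearMap.adjoint g xt))
    (F : EuclideanSpace ℝ (Fin n)) (w : EuclideanSpace ℝ (Fin m)) :
    ⟪(‖xt‖)⁻¹ • xt, F + (g + δ) (u + w)⟫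
      ≤ ‖ContinuousLinearMap.adjoint g xt‖ / ‖xt‖ *
        (-κ + (gbar + δbar) / gbar * ‖w‖ + ‖F‖ / gbar) := by
  have hdiss := real_inner_add_apply_tracking_control_le hδg hδnorm hκ (hgmin xt) F w
  rw [real_inner_smul_left, hu]
  exact (mul_le_mul_of_nonneg_left hdiss (by positivity)).trans_eq (by ring)

/-- The pointwise dissipation inequality (64) in the proof of Proposition 3 of the
paper, along the tracking-error dynamics `D⁺xt = F + (g+δ)(u+w)` with the explicit
tracking control law `u = −(gᵀxt/‖gᵀxt‖)·(ḡ/(ḡ−δ̄))·κ`. The eigenvalue condition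
`λ_min(g gᵀ) ≥ ḡ²` is encoded by its equivalent form `‖gᵀ p‖ ≥ ḡ ‖p‖`. -/
theorem stmt15 (n m : ℕ) (hn : 1 ≤ n) (hm : 1 ≤ m)
    (gbar δbar : ℝ) (hδ0 : 0 ≤ δbar) (hδg : δbar < gbar)
    (g δ : EuclideanSpace ℝ (Fin m) →L[ℝ] EuclideanSpace ℝ (Fin n))
    (hgmin : ∀ p : EuclideanSpace ℝ (Fin n),
      gbar * ‖p‖ ≤ ‖ContinuousLinearMap.adjoint g p‖)
    (hδnorm : ‖δ‖ ≤ δbar)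
    (xt : EuclideanSpace ℝ (Fin n)) (hxt : xt ≠ 0)
    (κ : ℝ) (hκ : 0 ≤ κ)
    (u : EuclideanSpace ℝ (Fin m))
    (hu : u = -((gbar / (gbar - δbar)) * κ) •
      ((‖ContinuousLinearMap.adjoint g xt‖)⁻¹ • ContinuousLinearMap.adjoint g xt))
    (F : EuclideanSpace ℝ (Fin n)) (w : EuclideanSpace ℝ (Fin m)) :
    ⟪(‖xt‖)⁻¹ • xt, F + (g + δ) (u + w)⟫
      ≤ ‖ContinuousLinearMap.adjoint g xt‖ / ‖xt‖ *
        (-κ + (gbar + δbar) / gbar * ‖w‖ + ‖F‖ / gbar) :=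
  stmt15_general n m gbar δbar hδg g δ hgmin hδnorm xt κ hκ u hu F w
end

section
/- Fix integers n, m ≥ 1 and constants 0 ≤ δ̄ < ḡ ≤ ḡ_u. Let g be a real n×m matrix with λ_min(g·gᵀ) ≥ ḡ² and induced 2-norm ‖g‖ ≤ ḡ_u. Let κ : ℝ → ℝ be an odd, continuously differentiable, strictly increasing function, and define ρ : ℝ^n → ℝ^m by ρ(v) = −(gᵀv/‖gᵀv‖)·(ḡ/(ḡ−δ̄))·κ(‖v‖) for v ≠ 0 and ρ(0) = 0. If k is a constant such that k ≥ (ḡ/(ḡ−δ̄))·( (ḡ_u/ḡ)·κ(s)/s + κ′(s) ) for every s > 0, then ρ is Lipschitz with constant k, i.e., ‖ρ(v) − ρ(v′)‖ ≤ k·‖v − v′‖ for all v, v′ ∈ ℝ^n. -/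
/-!
Let `m ‖v‖ ≤ ‖A v‖` and `‖A‖ ≤ M`. The map `ρ v = φ ‖v‖ • (A v / ‖A v‖)` is differentiable away
from the origin, with derivative
`w ↦ φ' ‖v‖ ⟪v̂, w⟫ • (A v / ‖A v‖) + (φ ‖v‖ / ‖A v‖) • P (A w)`, where `P` is the orthogonal
projection onto `(A v)ᗮ`. Since `‖P‖ ≤ 1` and `‖A w‖ / ‖A v‖ ≤ (M / m) ‖w‖ / ‖v‖`, the derivative
is bounded by `|φ' s| + (M / m) |φ s| / s` with `s = ‖v‖`. The mean value inequality then gives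
the Lipschitz bound on every segment avoiding the origin; a segment through the origin is split
there, using `‖ρ v‖ ≤ |φ ‖v‖| ≤ k ‖v‖`.
-/

open scoped RealInnerProductSpace

theorem norm_image_sub_le_of_norm_hasFDerivAt_le_off_zero {E F : Type*}
    [NormedAddCommGroup E] [NormedSpace ℝ E] [NormedAddCommGroup F] [NormedSpace ℝ F]
    {f : E → F} {f' : E → E →L[ℝ] F} {k : ℝ} (hf : ∀ x ≠ 0, HasFDerivAt f (f' x) x)
    (hf' : ∀ x ≠ 0, ‖f' x‖ ≤ k) (hgrowth : ∀ x, ‖f x‖ ≤ k * ‖x‖) (v v' : E) :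
    ‖f v - f v'‖ ≤ k * ‖v - v'‖ := by
  by_cases h0 : (0 : E) ∈ segment ℝ v v'
  · have hsplit := (mem_segment_iff_wbtw.1 h0).dist_add_dist
    simp only [dist_eq_norm, sub_zero, zero_sub, norm_neg] at hsplit
    calc ‖f v - f v'‖ ≤ ‖f v‖ + ‖f v'‖ := norm_sub_le _ _
      _ ≤ k * ‖v‖ + k * ‖v'‖ := add_le_add (hgrowth v) (hgrowth v')
      _ = k * ‖v - v'‖ := by rw [← hsplit, mul_add]
  · have hne : ∀ x ∈ segment ℝ v v', x ≠ 0 := fun x hx h => h0 (h ▸ hx)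
    exact (convex_segment v v').norm_image_sub_le_of_norm_hasFDerivWithin_le
      (fun x hx => (hf x (hne x hx)).hasFDerivWithinAt) (fun x hx => hf' x (hne x hx))
      (right_mem_segment ℝ v v') (left_mem_segment ℝ v v')

section RadialFeedback

variable {E F : Type*} [NormedAddCommGroup E] [InnerProductSpace ℝ E]
  [NormedAddCommGroup F] [InnerProductSpace ℝ F]

theorem norm_inv_norm_smul_le_one (u : F) : ‖‖u‖⁻¹ • u‖ ≤ 1 := by
  rw [norm_smul, norm_inv, norm_norm]
  exact inv_mul_le_one

theorem hasFDerivAt_norm_of_ne_zero {a : F} (ha : a ≠ 0) :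
    HasFDerivAt (‖·‖) (‖a‖⁻¹ • innerSL ℝ a) a := by
  have h := (hasStrictFDerivAt_norm_sq a).hasFDerivAt.sqrt (by positivity)
  simp only [Real.sqrt_sq (norm_nonneg _)] at h
  convert h using 1
  ext w
  simp only [smul_apply, coe_innerSL_apply, smul_eq_mul, one_div,
    mul_inv_rev, nsmul_eq_mul, Nat.cast_ofNat]
  field_simp

theorem hasFDerivAt_norm_inv_smul {a : F} (ha : a ≠ 0) :
    HasFDerivAt (fun y : F => ‖y‖⁻¹ • y) (‖a‖⁻¹ • (ℝ ∙ a)ᗮ.starProjection) a := by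
  refine (((hasDerivAt_inv (norm_ne_zero_iff.2 ha)).comp_hasFDerivAt a
    (hasFDerivAt_norm_of_ne_zero ha)).smul (hasFDerivAt_id a)).congr_fderiv ?_
  ext w
  simp only [Function.comp_apply, neg_smul, id_eq, add_apply,
    smul_apply, ContinuousLinearMap.id_apply,
    ContinuousLinearMap.smulRight_apply, neg_apply, coe_innerSL_apply,
    smul_eq_mul, Submodule.starProjection_orthogonal_val, Submodule.starProjection_singleton,
    Real.ringHom_apply]
  module

/-- Where `A v = 0` the value is `0`, as `‖A v‖⁻¹ = 0`. -/
noncomputable def radialFeedback (φ : ℝ → ℝ) (A : E →L[ℝ] F) (v : E) : F :=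
  φ ‖v‖ • (‖A v‖⁻¹ • A v)

noncomputable def radialFeedbackDeriv (φ : ℝ → ℝ) (A : E →L[ℝ] F) (x : E) : E →L[ℝ] F :=
  φ ‖x‖ • (‖A x‖⁻¹ • (ℝ ∙ A x)ᗮ.starProjection).comp A +
    (deriv φ ‖x‖ • ‖x‖⁻¹ • innerSL ℝ x).smulRight (‖A x‖⁻¹ • A x)

variable {φ : ℝ → ℝ} {A : E →L[ℝ] F}

theorem norm_radialFeedback_le (v : E) : ‖radialFeedback φ A v‖ ≤ |φ ‖v‖| := by
  rw [radialFeedback, norm_smul, Real.norm_eq_abs]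
  exact mul_le_of_le_one_right (abs_nonneg _) (norm_inv_norm_smul_le_one _)

theorem hasFDerivAt_radialFeedback {x : E} (hφ : DifferentiableAt ℝ φ ‖x‖) (hAx : A x ≠ 0) :
    HasFDerivAt (radialFeedback φ A) (radialFeedbackDeriv φ A x) x := by
  have hx : x ≠ 0 := by rintro rfl; exact hAx (map_zero A)
  exact (hφ.hasDerivAt.comp_hasFDerivAt x (hasFDerivAt_norm_of_ne_zero hx)).smul
    ((hasFDerivAt_norm_inv_smul hAx).comp x A.hasFDerivAt)

theorem norm_radialFeedbackDeriv_le (x : E) :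
    ‖radialFeedbackDeriv φ A x‖ ≤ |deriv φ ‖x‖| + |φ ‖x‖| * (‖A‖ / ‖A x‖) := by
  have hproj : ‖(ℝ ∙ A x)ᗮ.starProjection.comp A‖ ≤ ‖A‖ :=
    (ContinuousLinearMap.opNorm_comp_le _ _).trans
      (mul_le_of_le_one_left (norm_nonneg _) (Submodule.starProjection_norm_le _))
  have hradial : ‖‖x‖⁻¹ • innerSL ℝ x‖ ≤ 1 := by
    simpa only [norm_smul, innerSL_apply_norm] using norm_inv_norm_smul_le_one x
  calc ‖radialFeedbackDeriv φ A x‖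
      ≤ |φ ‖x‖| * (‖A x‖⁻¹ * ‖(ℝ ∙ A x)ᗮ.starProjection.comp A‖) +
          |deriv φ ‖x‖| * ‖‖x‖⁻¹ • innerSL ℝ x‖ * ‖‖A x‖⁻¹ • A x‖ := by
        refine (norm_add_le _ _).trans_eq ?_
        rw [ContinuousLinearMap.norm_smulRight_apply, norm_smul, norm_smul,
          ContinuousLinearMap.smul_comp, norm_smul, norm_inv, norm_norm, Real.norm_eq_abs,
          Real.norm_eq_abs]
    _ ≤ |φ ‖x‖| * (‖A x‖⁻¹ * ‖A‖) + |deriv φ ‖x‖| * 1 * 1 := by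
        gcongr
        exact norm_inv_norm_smul_le_one _
    _ = |deriv φ ‖x‖| + |φ ‖x‖| * (‖A‖ / ‖A x‖) := by ring

theorem norm_radialFeedback_sub_le {m M k : ℝ}
    (hm : 0 < m) (hmM : m ≤ M) (hAnorm : ‖A‖ ≤ M) (hAmin : ∀ x, m * ‖x‖ ≤ ‖A x‖)
    (hφ : ∀ s, 0 < s → DifferentiableAt ℝ φ s) (hφ0 : φ 0 = 0)
    (hk : ∀ s, 0 < s → M / m * (|φ s| / s) + |deriv φ s| ≤ k) (v v' : E) :
    ‖radialFeedback φ A v - radialFeedback φ A v'‖ ≤ k * ‖v - v'‖ := by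
  have hmx : ∀ x : E, x ≠ 0 → 0 < m * ‖x‖ := fun x hx => mul_pos hm (norm_pos_iff.2 hx)
  refine norm_image_sub_le_of_norm_hasFDerivAt_le_off_zero (f' := radialFeedbackDeriv φ A)
    (fun x hx => ?_) (fun x hx => ?_) (fun x => ?_) v v'
  · exact hasFDerivAt_radialFeedback (hφ _ (norm_pos_iff.2 hx))
      (norm_pos_iff.1 ((hmx x hx).trans_le (hAmin x)))
  · have hs := norm_pos_iff.2 hx
    calc ‖radialFeedbackDeriv φ A x‖ ≤ |deriv φ ‖x‖| + |φ ‖x‖| * (‖A‖ / ‖A x‖) :=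
          norm_radialFeedbackDeriv_le x
      _ ≤ |deriv φ ‖x‖| + |φ ‖x‖| * (M / (m * ‖x‖)) := by
          gcongr
          · exact (hm.trans_le hmM).le
          · exact hAmin x
      _ = M / m * (|φ ‖x‖| / ‖x‖) + |deriv φ ‖x‖| := by field_simp; ring
      _ ≤ k := hk _ hs
  · rcases eq_or_ne x 0 with rfl | hx
    · simpa [hφ0] using norm_radialFeedback_le (φ := φ) (A := A) (0 : E)
    have hs := norm_pos_iff.2 hx
    calc ‖radialFeedback φ A x‖ ≤ |φ ‖x‖| := norm_radialFeedback_le x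
      _ = ‖x‖ * (|φ ‖x‖| / ‖x‖) := by field_simp
      _ ≤ ‖x‖ * (M / m * (|φ ‖x‖| / ‖x‖) + |deriv φ ‖x‖|) := by
          gcongr
          refine le_add_of_le_of_nonneg (le_mul_of_one_le_left (by positivity) ?_) (abs_nonneg _)
          exact (one_le_div hm).2 hmM
      _ ≤ ‖x‖ * k := by gcongr; exact hk _ hs
      _ = k * ‖x‖ := mul_comm _ _

end RadialFeedback

theorem stmt16_general (n m : ℕ)
    (gbar gbaru δbar : ℝ) (hδ0 : 0 ≤ δbar) (hδg : δbar < gbar) (hgu : gbar ≤ gbaru)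
    (g : EuclideanSpace ℝ (Fin m) →L[ℝ] EuclideanSpace ℝ (Fin n))
    (hgmin : ∀ p : EuclideanSpace ℝ (Fin n),
      gbar * ‖p‖ ≤ ‖ContinuousLinearMap.adjoint g p‖)
    (hgnorm : ‖g‖ ≤ gbaru)
    (κ : ℝ → ℝ) (hκodd : ∀ s, κ (-s) = -κ s) (hκC1 : ContDiff ℝ 1 κ)
    (hκmono : StrictMono κ)
    (ρ : EuclideanSpace ℝ (Fin n) → EuclideanSpace ℝ (Fin m))
    (hρ0 : ρ 0 = 0)
    (hρ : ∀ v : EuclideanSpace ℝ (Fin n), v ≠ 0 →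
      ρ v = -((gbar / (gbar - δbar)) * κ ‖v‖) •
        ((‖ContinuousLinearMap.adjoint g v‖)⁻¹ • ContinuousLinearMap.adjoint g v))
    (k : ℝ)
    (hk : ∀ s : ℝ, 0 < s →
      gbar / (gbar - δbar) * (gbaru / gbar * (κ s / s) + deriv κ s) ≤ k) :
    ∀ v v' : EuclideanSpace ℝ (Fin n), ‖ρ v - ρ v'‖ ≤ k * ‖v - v'‖ := by
  set c := gbar / (gbar - δbar)
  have hgbar : 0 < gbar := hδ0.trans_lt hδg
  have hc : 0 < c := div_pos hgbar (sub_pos.2 hδg)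
  have hκ0 : κ 0 = 0 := by linarith [neg_zero (G := ℝ) ▸ hκodd 0]
  have hκd : Differentiable ℝ κ := hκC1.differentiable one_ne_zero
  have hρ_eq : ρ = radialFeedback (fun s => -(c * κ s)) (ContinuousLinearMap.adjoint g) := by
    funext v
    rcases eq_or_ne v 0 with rfl | hv
    · simp [hρ0, radialFeedback]
    · exact hρ v hv
  rw [hρ_eq]
  refine norm_radialFeedback_sub_le hgbar hgu (by rwa [ContinuousLinearMap.adjoint.norm_map])
    hgmin (fun s _ => ((hκd s).const_mul c).neg) (by simp [hκ0]) (fun s hs => ?_)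
  have hκs : 0 ≤ κ s := hκ0 ▸ hκmono.monotone hs.le
  rw [deriv.fun_neg, deriv_const_mul _ (hκd s), abs_neg, abs_neg,
    abs_of_nonneg (mul_nonneg hc.le hκs),
    abs_of_nonneg (mul_nonneg hc.le hκmono.monotone.deriv_nonneg)]
  calc gbaru / gbar * (c * κ s / s) + c * deriv κ s
      = c * (gbaru / gbar * (κ s / s) + deriv κ s) := by ring
    _ ≤ k := hk s hs

/-- The Lipschitz bound (62) together with the derivative estimate (75) in
Proposition 3 of the paper: the explicit reference-tracking virtual control law
`ρ(v) = −(gᵀv/‖gᵀv‖)·(ḡ/(ḡ−δ̄))·κ(‖v‖)` (with `ρ(0) = 0`) is globally Lipschitz with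
any constant `k ≥ (ḡ/(ḡ−δ̄))·((ḡᵤ/ḡ)·κ(s)/s + κ′(s))` for all `s > 0`. The
eigenvalue condition `λ_min(g gᵀ) ≥ ḡ²` is encoded by its equivalent form
`‖gᵀ p‖ ≥ ḡ ‖p‖`, and `‖g‖` is the operator (induced 2-) norm. -/
theorem stmt16 (n m : ℕ) (hn : 1 ≤ n) (hm : 1 ≤ m)
    (gbar gbaru δbar : ℝ) (hδ0 : 0 ≤ δbar) (hδg : δbar < gbar) (hgu : gbar ≤ gbaru)
    (g : EuclideanSpace ℝ (Fin m) →L[ℝ] EuclideanSpace ℝ (Fin n))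
    (hgmin : ∀ p : EuclideanSpace ℝ (Fin n),
      gbar * ‖p‖ ≤ ‖ContinuousLinearMap.adjoint g p‖)
    (hgnorm : ‖g‖ ≤ gbaru)
    (κ : ℝ → ℝ) (hκodd : ∀ s, κ (-s) = -κ s) (hκC1 : ContDiff ℝ 1 κ)
    (hκmono : StrictMono κ)
    (ρ : EuclideanSpace ℝ (Fin n) → EuclideanSpace ℝ (Fin m))
    (hρ0 : ρ 0 = 0)
    (hρ : ∀ v : EuclideanSpace ℝ (Fin n), v ≠ 0 →
      ρ v = -((gbar / (gbar - δbar)) * κ ‖v‖) •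
        ((‖ContinuousLinearMap.adjoint g v‖)⁻¹ • ContinuousLinearMap.adjoint g v))
    (k : ℝ)
    (hk : ∀ s : ℝ, 0 < s →
      gbar / (gbar - δbar) * (gbaru / gbar * (κ s / s) + deriv κ s) ≤ k) :
    ∀ v v' : EuclideanSpace ℝ (Fin n), ‖ρ v - ρ v'‖ ≤ k * ‖v - v'‖ :=
  stmt16_general n m gbar gbaru δbar hδ0 hδg hgu g hgmin hgnorm κ hκodd hκC1 hκmono ρ hρ0 hρ k hk
end

section
/- Let 0 < D ≤ 1 and set o_1 = (0,1), o_2 = (0,−1) ∈ ℝ². For x ∈ ℝ² with x ≠ o_1 and x ≠ o_2, define U(x) = { u ∈ ℝ² : −⟨(x−o_i)/‖x−o_i‖, u⟩ ≤ (‖x−o_i‖² − D²)/(2‖x−o_i‖) for i = 1,2 }. Then for every t ∈ ℝ with (t,0) in the domain, the set U((t,0)) is nonempty, closed and convex, there is a unique minimizer ρ_c((t,0)) of ‖u − (1,0)‖ over U((t,0)), and ρ_c((t,0)) = ( (D² − t² − 1)/(2t), 0 ) if t ∈ (−D−1, D−1), while ρ_c((t,0)) = (1,0) if t ∉ (−D−1,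 D−1). -/
/-! On the axis `x = (t, 0)` the two barrier constraints combine into
`|u₁| ≤ t u₀ + (t² + 1 − D²)/2`. If the nominal control `(1, 0)` satisfies this, i.e. `|t + 1| ≥ D`,
it is optimal. Otherwise `t < 0`, so the constraint forces `u₀ ≤ r = (D² − t² − 1)/(2t) ≤ 1`, and
`(r, 0)` is feasible and closest to `(1, 0)`. Uniqueness holds because the feasible set is convex
and the Euclidean norm is strictly convex. -/

open scoped RealInnerProductSpace

/-- The point `(x, y)` of the Euclidean plane. -/
noncomputable def vec2 (x y : ℝ) : EuclideanSpace ℝ (Fin 2) :=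
  (WithLp.equiv 2 (Fin 2 → ℝ)).symm ![x, y]

def IsNearestPoint {E : Type*} [Norm E] [Sub E] (K : Set E) (p ρ : E) : Prop :=
  ρ ∈ K ∧ ∀ u ∈ K, ‖ρ - p‖ ≤ ‖u - p‖

theorem isNearestPoint_self {E : Type*} [SeminormedAddCommGroup E] {K : Set E} {p : E}
    (hp : p ∈ K) : IsNearestPoint K p p :=
  ⟨hp, fun u _ => by simp⟩

theorem Convex.eq_of_isNearestPoint {E : Type*} [NormedAddCommGroup E] [NormedSpace ℝ E]
    [StrictConvexSpace ℝ E] {K : Set E} (hK : Convex ℝ K) {p ρ ρ' : E}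
    (hρ : IsNearestPoint K p ρ) (hρ' : IsNearestPoint K p ρ') : ρ' = ρ := by
  have hnorm : ‖ρ' - p‖ = ‖ρ - p‖ := le_antisymm (hρ'.2 ρ hρ.1) (hρ.2 ρ' hρ'.1)
  by_contra hne
  have hmid : (1 / 2 : ℝ) • ρ' + (1 / 2 : ℝ) • ρ ∈ K :=
    hK hρ'.1 hρ.1 (by norm_num) (by norm_num) (by norm_num)
  have hlt := (norm_midpoint_lt_iff hnorm).2 (sub_left_injective.ne hne)
  rw [show (1 / 2 : ℝ) • (ρ' - p + (ρ - p)) = (1 / 2 : ℝ) • ρ' + (1 / 2 : ℝ) • ρ - p by module]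
    at hlt
  exact (hρ'.2 _ hmid).not_gt hlt

section Barrier

variable {E : Type*} [NormedAddCommGroup E] [InnerProductSpace ℝ E]

/-- The control-barrier constraint of the disc of radius `D` around `o`, at the state `x`. -/
def barrierHalfSpace (D : ℝ) (x o : E) : Set E :=
  {u | -⟪‖x - o‖⁻¹ • (x - o), u⟫ ≤ (‖x - o‖ ^ 2 - D ^ 2) / (2 * ‖x - o‖)}

theorem isClosed_barrierHalfSpace (D : ℝ) (x o : E) : IsClosed (barrierHalfSpace D x o) :=
  isClosed_le (by fun_prop) continuous_const

theorem convex_barrierHalfSpace (D : ℝ) (x o : E) : Convex ℝ (barrierHalfSpace D x o) :=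
  convex_halfSpace_le ⟨fun a b => by simp only [inner_add_right]; ring,
    fun c a => by simp only [real_inner_smul_right, smul_eq_mul]; ring⟩ _

theorem mem_barrierHalfSpace_iff {D : ℝ} {x o : E} (h : x ≠ o) (u : E) :
    u ∈ barrierHalfSpace D x o ↔ -⟪x - o, u⟫ ≤ (‖x - o‖ ^ 2 - D ^ 2) / 2 := by
  have hpos : 0 < ‖x - o‖ := norm_pos_iff.2 (sub_ne_zero.2 h)
  rw [barrierHalfSpace, Set.mem_ofPred_eq, real_inner_smul_left, ← mul_neg, ← div_div,
    inv_mul_le_iff₀ hpos, mul_div_cancel₀ _ hpos.ne']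

end Barrier

@[simp] theorem vec2_apply_zero (a b : ℝ) : vec2 a b 0 = a := rfl

@[simp] theorem vec2_apply_one (a b : ℝ) : vec2 a b 1 = b := rfl

theorem vec2_sub_vec2 (a b c d : ℝ) : vec2 a b - vec2 c d = vec2 (a - c) (b - d) := by
  ext i; fin_cases i <;> simp

theorem vec2_ne_vec2_of_ne_right {a b c d : ℝ} (h : b ≠ d) : vec2 a b ≠ vec2 c d :=
  fun he => h (congrArg (· 1) he)

theorem inner_vec2_left (a b : ℝ) (u : EuclideanSpace ℝ (Fin 2)) :
    ⟪vec2 a b, u⟫ = a * u 0 + b * u 1 := by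
  simp [PiLp.inner_apply, Fin.sum_univ_two, mul_comm]

theorem norm_vec2_sq (a b : ℝ) : ‖vec2 a b‖ ^ 2 = a ^ 2 + b ^ 2 := by
  rw [← real_inner_self_eq_norm_sq, inner_vec2_left, vec2_apply_zero, vec2_apply_one]; ring

theorem norm_vec2_zero (a : ℝ) : ‖vec2 a 0‖ = |a| := by
  rw [← sq_eq_sq₀ (norm_nonneg _) (abs_nonneg a), norm_vec2_sq, sq_abs]; ring

/-- The feasible set `U((t, 0))` for the obstacles centered at `(0, 1)` and `(0, -1)`. -/
def axisFeasibleSet (D t : ℝ) : Set (EuclideanSpace ℝ (Fin 2)) :=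
  barrierHalfSpace D (vec2 t 0) (vec2 0 1) ∩ barrierHalfSpace D (vec2 t 0) (vec2 0 (-1))

theorem mem_axisFeasibleSet_iff (D t : ℝ) (u : EuclideanSpace ℝ (Fin 2)) :
    u ∈ axisFeasibleSet D t ↔ |u 1| ≤ t * u 0 + (t ^ 2 + 1 - D ^ 2) / 2 := by
  rw [axisFeasibleSet, Set.mem_inter_iff,
    mem_barrierHalfSpace_iff (vec2_ne_vec2_of_ne_right (by norm_num)),
    mem_barrierHalfSpace_iff (vec2_ne_vec2_of_ne_right (by norm_num)),
    vec2_sub_vec2, vec2_sub_vec2, inner_vec2_left, inner_vec2_left, norm_vec2_sq, norm_vec2_sq,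
    abs_le]
  constructor <;> rintro ⟨h₁, h₂⟩ <;> constructor <;> linarith

theorem zero_mem_axisFeasibleSet {D : ℝ} (hD0 : 0 < D) (hD1 : D ≤ 1) (t : ℝ) :
    0 ∈ axisFeasibleSet D t := by
  rw [mem_axisFeasibleSet_iff]
  simp only [PiLp.zero_apply, abs_zero, mul_zero, zero_add]
  nlinarith

theorem isNearestPoint_axisFeasibleSet_of_mem_Ioo {D t : ℝ} (hD1 : D ≤ 1)
    (ht : t ∈ Set.Ioo (-D - 1) (D - 1)) :
    IsNearestPoint (axisFeasibleSet D t) (vec2 1 0) (vec2 ((D ^ 2 - t ^ 2 - 1) / (2 * t)) 0) := by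
  obtain ⟨hlo, hhi⟩ := ht
  set r := (D ^ 2 - t ^ 2 - 1) / (2 * t)
  have htr : t * r = -((t ^ 2 + 1 - D ^ 2) / 2) := by
    have : t ≠ 0 := by linarith
    simp only [r]; field_simp; ring
  have hbound : ∀ u ∈ axisFeasibleSet D t, u 0 ≤ r := by
    intro u hu
    rw [mem_axisFeasibleSet_iff] at hu
    nlinarith [abs_nonneg (u 1)]
  have hr1 : r ≤ 1 := by nlinarith
  refine ⟨by simp [mem_axisFeasibleSet_iff, htr], fun u hu => ?_⟩
  calc ‖vec2 r 0 - vec2 1 0‖ = 1 - r := by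
        rw [vec2_sub_vec2, sub_zero, norm_vec2_zero, abs_of_nonpos (by linarith)]; ring
    _ ≤ 1 - u 0 := by linarith [hbound u hu]
    _ ≤ ‖(u - vec2 1 0) 0‖ := by
        rw [PiLp.sub_apply, vec2_apply_zero, Real.norm_eq_abs, abs_sub_comm]; exact le_abs_self _
    _ ≤ ‖u - vec2 1 0‖ := PiLp.norm_apply_le _ _

theorem vec2_one_zero_mem_axisFeasibleSet {D t : ℝ} (hD0 : 0 < D)
    (ht : t ∉ Set.Ioo (-D - 1) (D - 1)) : vec2 1 0 ∈ axisFeasibleSet D t := by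
  rw [Set.mem_Ioo, not_and_or, not_lt, not_lt] at ht
  rw [mem_axisFeasibleSet_iff, vec2_apply_zero, vec2_apply_one, abs_zero]
  rcases ht with ht | ht <;> nlinarith

/-- The explicit solution computed in Example 1 of the paper: along the symmetry
axis `x = (t, 0)`, the quadratic program `min ‖u − (1,0)‖²` over the feasible set
`U(x)` given by the two control-barrier constraints for the disc obstacles of
radius `D` centered at `o₁ = (0,1)` and `o₂ = (0,−1)` has the unique solution
`((D² − t² − 1)/(2t), 0)` for `t ∈ (−D−1, D−1)` and `(1,0)` otherwise. -/
theorem stmt17 (D : ℝ) (hD0 : 0 < D) (hD1 : D ≤ 1) :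
    ∀ t : ℝ, vec2 t 0 ≠ vec2 0 1 → vec2 t 0 ≠ vec2 0 (-1) →
      (let o₁ : EuclideanSpace ℝ (Fin 2) := vec2 0 1
       let o₂ : EuclideanSpace ℝ (Fin 2) := vec2 0 (-1)
       let x : EuclideanSpace ℝ (Fin 2) := vec2 t 0
       let U : Set (EuclideanSpace ℝ (Fin 2)) :=
         {u | -⟪(‖x - o₁‖)⁻¹ • (x - o₁), u⟫ ≤ (‖x - o₁‖ ^ 2 - D ^ 2) / (2 * ‖x - o₁‖) ∧
              -⟪(‖x - o₂‖)⁻¹ • (x - o₂), u⟫ ≤ (‖x - o₂‖ ^ 2 - D ^ 2) / (2 * ‖x - o₂‖)}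
       U.Nonempty ∧ IsClosed U ∧ Convex ℝ U ∧
         ∃ ρ : EuclideanSpace ℝ (Fin 2),
           (ρ ∈ U ∧ ∀ u ∈ U, ‖ρ - vec2 1 0‖ ≤ ‖u - vec2 1 0‖) ∧
           (∀ ρ' : EuclideanSpace ℝ (Fin 2),
             (ρ' ∈ U ∧ ∀ u ∈ U, ‖ρ' - vec2 1 0‖ ≤ ‖u - vec2 1 0‖) → ρ' = ρ) ∧
           ρ = if -D - 1 < t ∧ t < D - 1 then
                 vec2 ((D ^ 2 - t ^ 2 - 1) / (2 * t)) 0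
               else vec2 1 0) := by
  intro t _ _
  have hK : Convex ℝ (axisFeasibleSet D t) :=
    (convex_barrierHalfSpace _ _ _).inter (convex_barrierHalfSpace _ _ _)
  have hρ : IsNearestPoint (axisFeasibleSet D t) (vec2 1 0)
      (if -D - 1 < t ∧ t < D - 1 then vec2 ((D ^ 2 - t ^ 2 - 1) / (2 * t)) 0 else vec2 1 0) := by
    split_ifs with ht
    · exact isNearestPoint_axisFeasibleSet_of_mem_Ioo hD1 ht
    · exact isNearestPoint_self (vec2_one_zero_mem_axisFeasibleSet hD0 ht)
  exact ⟨⟨0, zero_mem_axisFeasibleSet hD0 hD1 t⟩,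
    (isClosed_barrierHalfSpace _ _ _).inter (isClosed_barrierHalfSpace _ _ _), hK,
    _, hρ, fun ρ' hρ' => hK.eq_of_isNearestPoint hρ hρ', rfl⟩
end
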